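/- arXiv:1309.3153 — 14 statements merged into one kernel-verified Lean document; each statement's English description precedes it below -/
import Mathlib

section
/- Let F(z) = D + C(zI−A)^{-1}B be a proper rational matrix function with (C,A) observable, and suppose matrices Λ, H, Π satisfy [[A,B],[C,D]]·[Π;H] = [ΠΛ;0]. Then F(z)·H(zI−Λ)^{-1} = −C(zI−A)^{-1}Π as rational matrix functions. -/
open Matrix

noncomputable section

/-- Map a complex matrix entrywise to rational functions. -/
def mc {a b : ℕ} (M : Matrix (Fin a) (Fin b) ℂ) : Matrix (Fin a) (Fin b) (RatFunc ℂ) :=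
  M.map (⇑(RatFunc.C : ℂ →+* RatFunc ℂ))

/-- The resolvent `(z I − M)⁻¹` as a matrix of rational functions. -/
def res {a : ℕ} (M : Matrix (Fin a) (Fin a) ℂ) : Matrix (Fin a) (Fin a) (RatFunc ℂ) :=
  ((Matrix.scalar (Fin a) (RatFunc.X : RatFunc ℂ)) - mc M)⁻¹

/-- Observability of a pair `(C, A)`. -/
def Observable {p n : ℕ} (C : Matrix (Fin p) (Fin n) ℂ) (A : Matrix (Fin n) (Fin n) ℂ) : Prop :=
  ∀ v : Fin n → ℂ, (∀ k : ℕ, C *ᵥ ((A ^ k) *ᵥ v) = 0) → v = 0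


lemma unit_det {a : ℕ} (M : Matrix (Fin a) (Fin a) ℂ) :
    IsUnit ((Matrix.scalar (Fin a) (RatFunc.X : RatFunc ℂ)) - mc M).det := by
  have h : (Matrix.scalar (Fin a) (RatFunc.X : RatFunc ℂ)) - mc M
      = (charmatrix M).map (algebraMap (Polynomial ℂ) (RatFunc ℂ)) := by
    ext i j
    by_cases hij : i = j <;>
      simp [hij, charmatrix, mc, Matrix.map_apply, Matrix.sub_apply,
        Matrix.scalar_apply, Matrix.diagonal_apply, RatFunc.algebraMap_C]
  rw [h, show M.charmatrix.map ⇑(algebraMap (Polynomial ℂ) (RatFunc ℂ))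
      = RingHom.mapMatrix (algebraMap (Polynomial ℂ) (RatFunc ℂ)) M.charmatrix from rfl,
    ← RingHom.map_det]
  have : (charmatrix M).det = M.charpoly := rfl
  rw [this]
  have hne : (algebraMap (Polynomial ℂ) (RatFunc ℂ)) M.charpoly ≠ 0 := by
    intro hc
    exact (Matrix.charpoly_monic M).ne_zero
      (RatFunc.algebraMap_injective ℂ (by simpa using hc))
  exact isUnit_iff_ne_zero.mpr (by simpa using hne)

lemma res_left {a : ℕ} (M : Matrix (Fin a) (Fin a) ℂ) :
    res M * ((Matrix.scalar (Fin a) (RatFunc.X : RatFunc ℂ)) - mc M) = 1 :=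
  Matrix.nonsing_inv_mul _ (unit_det M)

lemma res_right {a : ℕ} (M : Matrix (Fin a) (Fin a) ℂ) :
    ((Matrix.scalar (Fin a) (RatFunc.X : RatFunc ℂ)) - mc M) * res M = 1 :=
  Matrix.mul_nonsing_inv _ (unit_det M)

lemma scalar_comm' {a b : ℕ} (M : Matrix (Fin a) (Fin b) (RatFunc ℂ)) :
    Matrix.scalar (Fin a) (RatFunc.X : RatFunc ℂ) * M
      = M * Matrix.scalar (Fin b) (RatFunc.X : RatFunc ℂ) := by
  ext i j
  simp [Matrix.scalar_apply, Matrix.diagonal_mul, Matrix.mul_diagonal, mul_comm]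

lemma mc_mul {a b c : ℕ} (M : Matrix (Fin a) (Fin b) ℂ) (N : Matrix (Fin b) (Fin c) ℂ) :
    mc (M * N) = mc M * mc N := by
  simp [mc, Matrix.map_mul]

/-- if `AΠ + BH = ΠΛ` and `CΠ + DH = 0` with `(C,A)` observable, then
`F(z) H (zI−Λ)⁻¹ = − C (zI−A)⁻¹ Π`. -/
theorem stmt0 {n p q r : ℕ}
    (A : Matrix (Fin n) (Fin n) ℂ) (B : Matrix (Fin n) (Fin q) ℂ)
    (C : Matrix (Fin p) (Fin n) ℂ) (D : Matrix (Fin p) (Fin q) ℂ)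
    (Pm : Matrix (Fin n) (Fin r) ℂ) (H : Matrix (Fin q) (Fin r) ℂ)
    (Λ : Matrix (Fin r) (Fin r) ℂ)
    (hobs : Observable C A)
    (h1 : A * Pm + B * H = Pm * Λ) (h2 : C * Pm + D * H = 0) :
    (mc D + mc C * res A * mc B) * mc H * res Λ = -(mc C * res A * mc Pm) := by

  classical
  set S := (Matrix.scalar (Fin n) (RatFunc.X : RatFunc ℂ)) - mc A with hSdef
  set T := (Matrix.scalar (Fin r) (RatFunc.X : RatFunc ℂ)) - mc Λ with hTdef
  have hSA : res A * S = 1 := res_left A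
  have hT : T * res Λ = 1 := res_right Λ
  have key : mc B * mc H = S * mc Pm - mc Pm * T := by
    have hbh : B * H = Pm * Λ - A * Pm := by
      rw [eq_sub_iff_add_eq, add_comm]; exact h1
    have : mc (B * H) = mc (Pm * Λ) - mc (A * Pm) := by
      rw [hbh]; simp [mc, Matrix.map_sub]
    rw [← mc_mul, this, mc_mul, mc_mul, hSdef, hTdef,
      Matrix.sub_mul, Matrix.mul_sub, scalar_comm' (mc Pm)]
    abel
  have key2 : mc B * (mc H * res Λ) = S * (mc Pm * res Λ) - mc Pm := by
    rw [← Matrix.mul_assoc, key, Matrix.sub_mul, Matrix.mul_assoc (mc Pm) T, hT,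
      Matrix.mul_one, Matrix.mul_assoc S]
  have h2' : mc C * mc Pm = -(mc D * mc H) := by
    have : mc (C * Pm) + mc (D * H) = 0 := by
      have := congrArg mc h2
      simpa [mc, Matrix.map_add] using this
    rw [mc_mul, mc_mul] at this
    exact eq_neg_of_add_eq_zero_left this
  calc (mc D + mc C * res A * mc B) * mc H * res Λ
      = mc D * (mc H * res Λ) + mc C * (res A * (mc B * (mc H * res Λ))) := by
        simp only [Matrix.add_mul, Matrix.mul_assoc]
    _ = mc D * (mc H * res Λ) + mc C * (res A * S * (mc Pm * res Λ) - res A * mc Pm) := by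
        rw [key2, Matrix.mul_sub, Matrix.mul_assoc (res A) S]
    _ = mc D * (mc H * res Λ) + mc C * (mc Pm * res Λ) - mc C * (res A * mc Pm) := by
        rw [hSA, Matrix.one_mul, Matrix.mul_sub, add_sub_assoc]
    _ = -(mc C * res A * mc Pm) := by
        rw [← Matrix.mul_assoc (mc C) (mc Pm) (res Λ), h2', Matrix.neg_mul,
          Matrix.mul_assoc (mc D), Matrix.mul_assoc (mc C)]
        abel
end
end

section
/- Suppose (Π₁,H₁,Λ₁) and (Π₂,H₂,Λ₂) both satisfy [[A,B],[C,D]]·[Πᵢ;Hᵢ] = [ΠᵢΛᵢ;0]. Then the triple ([Π₁,Π₂], [H₁,H₂], diag(Λ₁,Λ₂)) is also a solution, and its range Im[Π₁,Π₂] equals Im Π₁ + Im Π₂. Consequently there exists a solution (Π_max, H_max, Λ_max) whose range Im Π_max contains the range of Π for every solution (Π,H,Λ). -/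
/-!
Stacking two solutions side by side, with the block-diagonal `Λ`, is again a solution, and its
column space is the sum of the two column spaces. Hence the column spaces of solutions form a
nonempty sup-closed family of subspaces of the Noetherian module `ℂⁿ`; a maximal member exists,
and closure under `⊔` makes it the greatest one.
-/

open Matrix

noncomputable section

/-- The "anti-resolvent" `(z I + M)⁻¹`, used for para-hermitian conjugates. -/
def resneg {a : ℕ} (M : Matrix (Fin a) (Fin a) ℂ) : Matrix (Fin a) (Fin a) (RatFunc ℂ) :=
  ((Matrix.scalar (Fin a) (RatFunc.X : RatFunc ℂ)) + mc M)⁻¹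

/-- Controllability of a pair `(Λ, G)`. -/
def Controllable {r m : ℕ} (L : Matrix (Fin r) (Fin r) ℂ) (G : Matrix (Fin r) (Fin m) ℂ) : Prop :=
  ∀ y : Fin r → ℂ, (∀ k : ℕ, y ᵥ* ((L ^ k) * G) = 0) → y = 0

/-- The range (column space) of a matrix, as a submodule of `ℂⁿ`. -/
def mrange {a b : ℕ} (M : Matrix (Fin a) (Fin b) ℂ) : Submodule ℂ (Fin a → ℂ) :=
  LinearMap.range M.mulVecLin

/-- The set of states reachable from the origin by a finite input sequence
producing identically zero output along the way (the minimal input-containing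
subspace `C*(Σ)`). -/
def OutNullReach {n p q : ℕ} (A : Matrix (Fin n) (Fin n) ℂ) (B : Matrix (Fin n) (Fin q) ℂ)
    (C : Matrix (Fin p) (Fin n) ℂ) (D : Matrix (Fin p) (Fin q) ℂ) (x : Fin n → ℂ) : Prop :=
  ∃ (j : ℕ) (ξ : ℕ → (Fin n → ℂ)) (u : ℕ → (Fin q → ℂ)),
    ξ 0 = 0 ∧ (∀ i < j, ξ (i + 1) = A *ᵥ ξ i + B *ᵥ u i ∧ C *ᵥ ξ i + D *ᵥ u i = 0) ∧ ξ j = x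

theorem SupClosed.exists_isGreatest {α : Type*} [SemilatticeSup α] [WellFoundedGT α] {s : Set α}
    (hs : SupClosed s) (hne : s.Nonempty) : ∃ a, IsGreatest s a := by
  obtain ⟨m, hm⟩ := WellFoundedGT.exists_maximal inferInstance s hne
  exact ⟨m, hm.prop, fun x hx ↦ le_sup_right.trans (hm.le_of_ge (hs hm.prop hx) le_sup_left)⟩

namespace Matrix

variable {R ι μ π κ κ' κ₁ κ₂ : Type*}

theorem fromCols_add_fromCols [Add R] (A₁ B₁ : Matrix ι κ₁ R) (A₂ B₂ : Matrix ι κ₂ R) :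
    fromCols A₁ A₂ + fromCols B₁ B₂ = fromCols (A₁ + B₁) (A₂ + B₂) := by
  ext i (j | j) <;> rfl

theorem mul_submatrix_id [Fintype μ] [Mul R] [AddCommMonoid R] (M : Matrix ι μ R)
    (N : Matrix μ κ R) (f : κ' → κ) : M * N.submatrix id f = (M * N).submatrix id f :=
  rfl

section Semiring

variable [Semiring R] [Fintype ι] [Fintype μ]

def IsZeroEquationSolution (A : Matrix ι ι R) (B : Matrix ι μ R) (C : Matrix π ι R)
    (D : Matrix π μ R) [Fintype κ] (P : Matrix ι κ R) (H : Matrix μ κ R) (L : Matrix κ κ R) :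
    Prop :=
  A * P + B * H = P * L ∧ C * P + D * H = 0

variable {A : Matrix ι ι R} {B : Matrix ι μ R} {C : Matrix π ι R} {D : Matrix π μ R}

theorem IsZeroEquationSolution.fromCols [Fintype κ₁] [Fintype κ₂]
    {P₁ : Matrix ι κ₁ R} {H₁ : Matrix μ κ₁ R} {L₁ : Matrix κ₁ κ₁ R}
    {P₂ : Matrix ι κ₂ R} {H₂ : Matrix μ κ₂ R} {L₂ : Matrix κ₂ κ₂ R}
    (h₁ : IsZeroEquationSolution A B C D P₁ H₁ L₁) (h₂ : IsZeroEquationSolution A B C D P₂ H₂ L₂) :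
    IsZeroEquationSolution A B C D (fromCols P₁ P₂) (fromCols H₁ H₂) (fromBlocks L₁ 0 0 L₂) := by
  simp only [IsZeroEquationSolution, mul_fromCols, fromCols_mul_fromBlocks, fromCols_add_fromCols,
    h₁.1, h₁.2, h₂.1, h₂.2, Matrix.mul_zero, add_zero, zero_add, fromCols_zero, and_self]

theorem IsZeroEquationSolution.submatrix [Fintype κ] [Fintype κ'] {P : Matrix ι κ R}
    {H : Matrix μ κ R} {L : Matrix κ κ R} (h : IsZeroEquationSolution A B C D P H L) (e : κ' ≃ κ) :
    IsZeroEquationSolution A B C D (P.submatrix id e) (H.submatrix id e) (L.submatrix e e) := by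
  constructor
  · rw [mul_submatrix_id, mul_submatrix_id, submatrix_mul_equiv, ← h.1]
    rfl
  · rw [mul_submatrix_id, mul_submatrix_id]
    exact congrArg (·.submatrix id e) h.2

theorem isZeroEquationSolution_zero [Fintype κ] :
    IsZeroEquationSolution A B C D (0 : Matrix ι κ R) 0 0 := by
  simp [IsZeroEquationSolution]

end Semiring

section CommSemiring

variable [CommSemiring R]

theorem range_mulVecLin_fromCols [Fintype κ₁] [Fintype κ₂] (P₁ : Matrix ι κ₁ R)
    (P₂ : Matrix ι κ₂ R) :
    LinearMap.range (fromCols P₁ P₂).mulVecLin =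
      LinearMap.range P₁.mulVecLin ⊔ LinearMap.range P₂.mulVecLin := by
  rw [range_mulVecLin, range_mulVecLin, range_mulVecLin, ← Submodule.span_union,
    ← Set.Sum.elim_range]
  congr 2
  ext (j | j) <;> rfl

theorem range_mulVecLin_submatrix_id [Fintype κ] [Fintype κ'] (P : Matrix ι κ R) (e : κ' ≃ κ) :
    LinearMap.range (P.submatrix id e).mulVecLin = LinearMap.range P.mulVecLin := by
  rw [range_mulVecLin, range_mulVecLin]
  exact congrArg _ (e.surjective.range_comp P.col)

end CommSemiring

section CommRing

variable [CommRing R] [Fintype ι] [Fintype μ]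

def zeroEquationSolutionRanges (A : Matrix ι ι R) (B : Matrix ι μ R) (C : Matrix π ι R)
    (D : Matrix π μ R) : Set (Submodule R (ι → R)) :=
  {W | ∃ (s : ℕ) (P : Matrix ι (Fin s) R) (H : Matrix μ (Fin s) R) (L : Matrix (Fin s) (Fin s) R),
    IsZeroEquationSolution A B C D P H L ∧ LinearMap.range P.mulVecLin = W}

variable (A : Matrix ι ι R) (B : Matrix ι μ R) (C : Matrix π ι R) (D : Matrix π μ R)

theorem zeroEquationSolutionRanges_nonempty : (zeroEquationSolutionRanges A B C D).Nonempty :=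
  ⟨_, 0, 0, 0, 0, isZeroEquationSolution_zero, rfl⟩

theorem supClosed_zeroEquationSolutionRanges : SupClosed (zeroEquationSolutionRanges A B C D) := by
  rintro _ ⟨s₁, P₁, H₁, L₁, h₁, rfl⟩ _ ⟨s₂, P₂, H₂, L₂, h₂, rfl⟩
  let e : Fin (s₁ + s₂) ≃ Fin s₁ ⊕ Fin s₂ := finSumFinEquiv.symm
  exact ⟨s₁ + s₂, _, _, _, (h₁.fromCols h₂).submatrix e,
    by rw [range_mulVecLin_submatrix_id, range_mulVecLin_fromCols]⟩

theorem exists_isZeroEquationSolution_forall_range_le [IsNoetherianRing R] :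
    ∃ (s : ℕ) (P : Matrix ι (Fin s) R) (H : Matrix μ (Fin s) R) (L : Matrix (Fin s) (Fin s) R),
      IsZeroEquationSolution A B C D P H L ∧
      ∀ (t : ℕ) (P' : Matrix ι (Fin t) R) (H' : Matrix μ (Fin t) R) (L' : Matrix (Fin t) (Fin t) R),
        IsZeroEquationSolution A B C D P' H' L' →
          LinearMap.range P'.mulVecLin ≤ LinearMap.range P.mulVecLin := by
  obtain ⟨_, ⟨s, P, H, L, h, rfl⟩, hmax⟩ :=
    (supClosed_zeroEquationSolutionRanges A B C D).exists_isGreatest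
      (zeroEquationSolutionRanges_nonempty A B C D)
  exact ⟨s, P, H, L, h, fun t P' H' L' h' ↦ hmax ⟨t, P', H', L', h', rfl⟩⟩

end CommRing

end Matrix

/-- concatenation of two solutions of the zero equation is a solution whose
range is the join of the ranges; consequently a range-maximal solution exists. -/
theorem stmt1 {n p q r₁ r₂ : ℕ}
    (A : Matrix (Fin n) (Fin n) ℂ) (B : Matrix (Fin n) (Fin q) ℂ)
    (C : Matrix (Fin p) (Fin n) ℂ) (D : Matrix (Fin p) (Fin q) ℂ)
    (P₁ : Matrix (Fin n) (Fin r₁) ℂ) (H₁ : Matrix (Fin q) (Fin r₁) ℂ) (Λ₁ : Matrix (Fin r₁) (Fin r₁) ℂ)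
    (P₂ : Matrix (Fin n) (Fin r₂) ℂ) (H₂ : Matrix (Fin q) (Fin r₂) ℂ) (Λ₂ : Matrix (Fin r₂) (Fin r₂) ℂ)
    (h11 : A * P₁ + B * H₁ = P₁ * Λ₁) (h12 : C * P₁ + D * H₁ = 0)
    (h21 : A * P₂ + B * H₂ = P₂ * Λ₂) (h22 : C * P₂ + D * H₂ = 0) :
    (A * fromCols P₁ P₂ + B * fromCols H₁ H₂
        = fromCols P₁ P₂ * fromBlocks Λ₁ 0 0 Λ₂
      ∧ C * fromCols P₁ P₂ + D * fromCols H₁ H₂ = 0)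
    ∧ LinearMap.range (fromCols P₁ P₂).mulVecLin = mrange P₁ ⊔ mrange P₂
    ∧ ∃ (s : ℕ) (Pmax : Matrix (Fin n) (Fin s) ℂ) (Hmax : Matrix (Fin q) (Fin s) ℂ)
        (Λmax : Matrix (Fin s) (Fin s) ℂ),
        A * Pmax + B * Hmax = Pmax * Λmax ∧ C * Pmax + D * Hmax = 0 ∧
        ∀ (t : ℕ) (P : Matrix (Fin n) (Fin t) ℂ) (H : Matrix (Fin q) (Fin t) ℂ)
          (L : Matrix (Fin t) (Fin t) ℂ),
          A * P + B * H = P * L → C * P + D * H = 0 → mrange P ≤ mrange Pmax := by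
  refine ⟨IsZeroEquationSolution.fromCols ⟨h11, h12⟩ ⟨h21, h22⟩, range_mulVecLin_fromCols P₁ P₂, ?_⟩
  obtain ⟨s, Pmax, Hmax, Λmax, hmax, hle⟩ := exists_isZeroEquationSolution_forall_range_le A B C D
  exact ⟨s, Pmax, Hmax, Λmax, hmax.1, hmax.2, fun t P H L h₁ h₂ ↦ hle t P H L ⟨h₁, h₂⟩⟩
end
end

section
/- Let (Π,H,Λ) satisfy AΠ + BH = ΠΛ and CΠ + DH = 0, and suppose Π has trivial kernel. Then there exists a feedback matrix K such that (A+BK)·Im Π ⊆ Im Π and Im Π ⊆ ker(C+DK); that is, Im Π is an output-nulling controlled-invariant subspace. One may take K so that KΠ = H. -/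
open Matrix

noncomputable section

/-- a solution of the zero equation with injective `Π` yields a feedback `K`
with `KΠ = H` exhibiting `Im Π` as output-nulling controlled-invariant. -/
theorem stmt2 {n p q r : ℕ}
    (A : Matrix (Fin n) (Fin n) ℂ) (B : Matrix (Fin n) (Fin q) ℂ)
    (C : Matrix (Fin p) (Fin n) ℂ) (D : Matrix (Fin p) (Fin q) ℂ)
    (Pm : Matrix (Fin n) (Fin r) ℂ) (H : Matrix (Fin q) (Fin r) ℂ) (Λ : Matrix (Fin r) (Fin r) ℂ)
    (h1 : A * Pm + B * H = Pm * Λ) (h2 : C * Pm + D * H = 0)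
    (hker : ∀ v : Fin r → ℂ, Pm *ᵥ v = 0 → v = 0) :
    ∃ K : Matrix (Fin q) (Fin n) ℂ, K * Pm = H ∧
      (∀ x ∈ mrange Pm, (A + B * K) *ᵥ x ∈ mrange Pm) ∧
      (∀ x ∈ mrange Pm, (C + D * K) *ᵥ x = 0) := by
  classical
  -- left inverse of Pm.mulVecLin
  have hinj : LinearMap.ker Pm.mulVecLin = ⊥ := by
    rw [LinearMap.ker_eq_bot']
    intro v hv
    exact hker v hv
  obtain ⟨g, hg⟩ := Pm.mulVecLin.exists_leftInverse_of_injective hinj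
  set K : Matrix (Fin q) (Fin n) ℂ := LinearMap.toMatrix' (H.mulVecLin ∘ₗ g) with hK
  have hKP : K * Pm = H := by
    have h0 : (K * Pm).mulVecLin = H.mulVecLin := by
      rw [Matrix.mulVecLin_mul, hK, ← Matrix.toLin'_apply', Matrix.toLin'_toMatrix',
        LinearMap.comp_assoc, hg, LinearMap.comp_id]
    have h := congrArg LinearMap.toMatrix' h0
    rwa [← Matrix.toLin'_apply', ← Matrix.toLin'_apply', LinearMap.toMatrix'_toLin',
      LinearMap.toMatrix'_toLin'] at h
  refine ⟨K, hKP, ?_, ?_⟩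
  · rintro x ⟨v, rfl⟩
    refine ⟨Λ *ᵥ v, ?_⟩
    have : (A + B * K) * Pm = Pm * Λ := by
      rw [Matrix.add_mul, Matrix.mul_assoc, hKP, h1]
    calc Pm.mulVecLin (Λ *ᵥ v) = (Pm * Λ) *ᵥ v := by
          simp [Matrix.mulVecLin, Matrix.mulVec_mulVec]
      _ = (A + B * K) *ᵥ Pm.mulVecLin v := by
          simp [Matrix.mulVecLin, ← this, Matrix.mulVec_mulVec]
  · rintro x ⟨v, rfl⟩
    have : (C + D * K) * Pm = 0 := by
      rw [Matrix.add_mul, Matrix.mul_assoc, hKP, h2]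
    calc (C + D * K) *ᵥ Pm.mulVecLin v = ((C + D * K) * Pm) *ᵥ v := by
          simp [Matrix.mulVecLin, Matrix.mulVec_mulVec]
      _ = 0 := by simp [this]
end
end

section
/- The maximal output-nulling controlled-invariant subspace V*(Σ) of a linear system (A,B,C,D) equals Im Π_max, where (Π_max, H_max, Λ_max) is a maximal solution (in the sense of range inclusion) of the equations AΠ + BH = ΠΛ, CΠ + DH = 0. -/
open Matrix

noncomputable section

/-- A subspace `V` is output-nulling controlled-invariant for `(A,B,C,D)`. -/
def ONCI {n p q : ℕ} (A : Matrix (Fin n) (Fin n) ℂ) (B : Matrix (Fin n) (Fin q) ℂ)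
    (C : Matrix (Fin p) (Fin n) ℂ) (D : Matrix (Fin p) (Fin q) ℂ)
    (V : Submodule ℂ (Fin n → ℂ)) : Prop :=
  ∃ K : Matrix (Fin q) (Fin n) ℂ,
    (∀ x ∈ V, (A + B * K) *ᵥ x ∈ V) ∧ (∀ x ∈ V, (C + D * K) *ᵥ x = 0)

/-!
If `(Π, H, Λ)` solves `AΠ + BH = ΠΛ`, `CΠ + DH = 0` and `R` is a generalized inverse of `Π`
(`Π R Π = Π`), the feedback `K = H R` gives `(A + BK)Π = ΠΛ(RΠ)` and `(C + DK)Π = 0`, so `Im Π`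
is output-nulling controlled-invariant. Conversely, if `K` witnesses that `V` is output-nulling
controlled-invariant and `E` is a projection onto `V`, then `(E, KE, (A + BK)E)` is a solution
with `Im E = V`, so maximality of `Π_max` gives `V ≤ Im Π_max`.
-/

section Field

variable {K : Type*} [Field K] {l m : Type*} [Fintype l] [Fintype m]

theorem Matrix.exists_mul_mul_eq_self (P : Matrix l m K) : ∃ R : Matrix m l K, P * R * P = P := by
  classical
  obtain ⟨σ, hσ⟩ := P.mulVecLin.rangeRestrict.exists_rightInverse_of_surjective
    P.mulVecLin.range_rangeRestrict
  obtain ⟨τ, hτ⟩ := (LinearMap.range P.mulVecLin).subtype.exists_leftInverse_of_injective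
    (LinearMap.range P.mulVecLin).ker_subtype
  refine ⟨LinearMap.toMatrix' (σ ∘ₗ τ), ext_iff_mulVec.mpr fun v => ?_⟩
  have hτP : τ (P *ᵥ v) = P.mulVecLin.rangeRestrict v := by
    simpa using LinearMap.congr_fun hτ (P.mulVecLin.rangeRestrict v)
  have hPσ : ∀ y, P *ᵥ σ y = y := fun y => by
    simpa using congrArg Subtype.val (LinearMap.congr_fun hσ y)
  simp only [← mulVec_mulVec, LinearMap.toMatrix'_mulVec, LinearMap.comp_apply, hτP, hPσ]
  rfl

theorem Submodule.exists_isProj_mulVecLin (V : Submodule K (m → K)) :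
    ∃ E : Matrix m m K, LinearMap.IsProj V E.mulVecLin := by
  classical
  obtain ⟨W, hW⟩ := V.exists_isCompl
  refine ⟨LinearMap.toMatrix' (V.projection W hW), fun x => ?_, fun x hx => ?_⟩
  · simp
  · simpa using Submodule.projection_apply_of_mem_left hW hx

theorem Matrix.mul_eq_of_isProj {V : Submodule K (m → K)} {E : Matrix m m K} {M : Matrix m l K}
    (hE : LinearMap.IsProj V E.mulVecLin) (hM : ∀ v, M *ᵥ v ∈ V) : E * M = M :=
  ext_iff_mulVec.mpr fun v => by
    rw [← mulVec_mulVec]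
    exact hE.map_id _ (hM v)

end Field

theorem onci_mrange_of_solution {n p q s : ℕ}
    {A : Matrix (Fin n) (Fin n) ℂ} {B : Matrix (Fin n) (Fin q) ℂ}
    {C : Matrix (Fin p) (Fin n) ℂ} {D : Matrix (Fin p) (Fin q) ℂ}
    {P : Matrix (Fin n) (Fin s) ℂ} {H : Matrix (Fin q) (Fin s) ℂ} {Λ : Matrix (Fin s) (Fin s) ℂ}
    (h1 : A * P + B * H = P * Λ) (h2 : C * P + D * H = 0) : ONCI A B C D (mrange P) := by
  obtain ⟨R, hR⟩ := P.exists_mul_mul_eq_self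
  have hfeedback : ∀ {r : ℕ} (X : Matrix (Fin r) (Fin n) ℂ) (Y : Matrix (Fin r) (Fin q) ℂ),
      (X + Y * (H * R)) * P = (X * P + Y * H) * (R * P) := by
    intro r X Y
    simp only [Matrix.add_mul, Matrix.mul_assoc]
    rw [← Matrix.mul_assoc P, hR]
  refine ⟨H * R, ?_, ?_⟩
  · rintro _ ⟨w, rfl⟩
    refine ⟨(Λ * (R * P)) *ᵥ w, ?_⟩
    simp only [mulVecLin_apply, mulVec_mulVec, hfeedback, h1, Matrix.mul_assoc]
  · rintro _ ⟨w, rfl⟩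
    simp only [mulVecLin_apply, mulVec_mulVec, hfeedback, h2, Matrix.zero_mul, zero_mulVec]

theorem ONCI.exists_solution_mrange_eq {n p q : ℕ}
    {A : Matrix (Fin n) (Fin n) ℂ} {B : Matrix (Fin n) (Fin q) ℂ}
    {C : Matrix (Fin p) (Fin n) ℂ} {D : Matrix (Fin p) (Fin q) ℂ}
    {V : Submodule ℂ (Fin n → ℂ)} (hV : ONCI A B C D V) :
    ∃ (P : Matrix (Fin n) (Fin n) ℂ) (H : Matrix (Fin q) (Fin n) ℂ) (L : Matrix (Fin n) (Fin n) ℂ),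
      A * P + B * H = P * L ∧ C * P + D * H = 0 ∧ mrange P = V := by
  obtain ⟨K, hinv, hnull⟩ := hV
  obtain ⟨E, hE⟩ := V.exists_isProj_mulVecLin
  refine ⟨E, K * E, (A + B * K) * E, ?_, ?_, hE.range⟩
  · rw [← Matrix.mul_assoc, ← Matrix.add_mul, Matrix.mul_eq_of_isProj hE]
    intro v
    rw [← mulVec_mulVec]
    exact hinv _ (hE.map_mem v)
  · rw [← Matrix.mul_assoc, ← Matrix.add_mul]
    refine ext_iff_mulVec.mpr fun v => ?_
    rw [← mulVec_mulVec, zero_mulVec]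
    exact hnull _ (hE.map_mem v)

/-- the maximal output-nulling controlled-invariant subspace equals
the range of a range-maximal solution of the zero equation. -/
theorem stmt3 {n p q s : ℕ}
    (A : Matrix (Fin n) (Fin n) ℂ) (B : Matrix (Fin n) (Fin q) ℂ)
    (C : Matrix (Fin p) (Fin n) ℂ) (D : Matrix (Fin p) (Fin q) ℂ)
    (Pmax : Matrix (Fin n) (Fin s) ℂ) (Hmax : Matrix (Fin q) (Fin s) ℂ)
    (Λmax : Matrix (Fin s) (Fin s) ℂ)
    (h1 : A * Pmax + B * Hmax = Pmax * Λmax) (h2 : C * Pmax + D * Hmax = 0)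
    (hmax : ∀ (t : ℕ) (P : Matrix (Fin n) (Fin t) ℂ) (H : Matrix (Fin q) (Fin t) ℂ)
      (L : Matrix (Fin t) (Fin t) ℂ),
      A * P + B * H = P * L → C * P + D * H = 0 → mrange P ≤ mrange Pmax) :
    ONCI A B C D (mrange Pmax) ∧
      ∀ V : Submodule ℂ (Fin n → ℂ), ONCI A B C D V → V ≤ mrange Pmax := by
  refine ⟨onci_mrange_of_solution h1 h2, fun V hV => ?_⟩
  obtain ⟨P, H, L, hP1, hP2, rfl⟩ := hV.exists_solution_mrange_eq
  exact hmax n P H L hP1 hP2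
end
end

section
/- Let h(z) be a polynomial vector with F(z)h(z) = 0, where F(z) = D + C(zI−A)^{-1}B and (C,A) is observable. Then g(z) = (zI−A)^{-1}B h(z) is also a polynomial vector, of degree at most deg h − 1. -/
open Matrix

noncomputable section

set_option maxHeartbeats 1000000
set_option synthInstance.maxHeartbeats 400000

namespace Stmt5Aux

open Polynomial

/-- The algebra map from polynomials to rational functions, as a ring hom. -/
abbrev φ : Polynomial ℂ →+* RatFunc ℂ := algebraMap (Polynomial ℂ) (RatFunc ℂ)

lemma phi_inj : Function.Injective φ := IsFractionRing.injective (Polynomial ℂ) (RatFunc ℂ)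

lemma map_mulVec {a b : ℕ} (M : Matrix (Fin a) (Fin b) (Polynomial ℂ)) (v : Fin b → Polynomial ℂ) :
    (M.map φ) *ᵥ (fun j => φ (v j)) = fun i => φ ((M *ᵥ v) i) := by
  funext i
  simp [Matrix.mulVec, dotProduct, map_sum, _root_.map_mul]

lemma mc_eq {a b : ℕ} (M : Matrix (Fin a) (Fin b) ℂ) :
    mc M = (M.map Polynomial.C).map φ := by
  funext i j
  simp [mc, Matrix.map_apply, RatFunc.algebraMap_C]

lemma charmatrix_map {a : ℕ} (A : Matrix (Fin a) (Fin a) ℂ) :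
    (charmatrix A).map φ = Matrix.scalar (Fin a) (RatFunc.X : RatFunc ℂ) - mc A := by
  funext i j
  by_cases hij : i = j
  · subst hij
    simp [mc, RatFunc.algebraMap_X, RatFunc.algebraMap_C]
  · simp [charmatrix_apply_ne _ _ _ hij, Matrix.scalar_apply, Matrix.diagonal_apply_ne _ hij,
      mc, RatFunc.algebraMap_C]

/-- Key induction: if `g` satisfies the resolvent equations and `e • g` is polynomial
for some monic `e`, then `g` is polynomial. -/
lemma key {n p : ℕ} {A : Matrix (Fin n) (Fin n) ℂ} {C : Matrix (Fin p) (Fin n) ℂ}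
    (hobs : Observable C A) (g : Fin n → RatFunc ℂ)
    (bp : Fin n → Polynomial ℂ) (dp : Fin p → Polynomial ℂ)
    (ha : ∀ i, RatFunc.X * g i = (mc A *ᵥ g) i + φ (bp i))
    (hb : ∀ i, (mc C *ᵥ g) i = φ (dp i)) :
    ∀ k : ℕ, ∀ e : Polynomial ℂ, ∀ P : Fin n → Polynomial ℂ, e.Monic → e.natDegree = k →
      (∀ i, φ e * g i = φ (P i)) → ∃ gp : Fin n → Polynomial ℂ, ∀ i, g i = φ (gp i) := by
  intro k
  induction k with
  | zero =>
    intro e P hmon hdeg hP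
    refine ⟨P, fun i => ?_⟩
    have he1 : e = 1 := hmon.natDegree_eq_zero.mp hdeg
    have := hP i
    rw [he1, _root_.map_one, one_mul] at this
    exact this
  | succ k ih =>
    intro e P hmon hdeg hP
    -- find a root λ of e
    have hdege : e.degree = (k + 1 : ℕ) := by
      rw [Polynomial.degree_eq_natDegree hmon.ne_zero, hdeg]
    have hdne : e.degree ≠ 0 := by rw [hdege]; exact_mod_cast Nat.succ_ne_zero k
    obtain ⟨lam, hlam⟩ := IsAlgClosed.exists_root (k := ℂ) e hdne
    obtain ⟨f, hf⟩ := (Polynomial.dvd_iff_isRoot.mpr hlam)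
    have hXCm : (Polynomial.X - Polynomial.C lam).Monic := Polynomial.monic_X_sub_C lam
    have hfm : f.Monic := hXCm.of_mul_monic_left (hf ▸ hmon)
    have hfdeg : f.natDegree = k := by
      have hX0 : (Polynomial.X - Polynomial.C lam) ≠ 0 := hXCm.ne_zero
      have hf0 : f ≠ 0 := hfm.ne_zero
      have := Polynomial.natDegree_mul hX0 hf0
      rw [← hf, hdeg, Polynomial.natDegree_X_sub_C] at this
      omega
    -- polynomial identities for P
    have hPA : ∀ i, Polynomial.X * P i = ((A.map Polynomial.C) *ᵥ P) i + e * bp i := by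
      intro i
      apply phi_inj
      have hmap : φ (((A.map Polynomial.C) *ᵥ P) i) = φ e * (mc A *ᵥ g) i := by
        simp only [Matrix.mulVec, dotProduct, map_sum, mc_eq, Matrix.map_apply]
        rw [Finset.mul_sum]
        refine Finset.sum_congr rfl fun j _ => ?_
        rw [_root_.map_mul, ← hP j]
        ring
      rw [_root_.map_mul, _root_.map_add, _root_.map_mul, hmap, RatFunc.algebraMap_X, ← hP i,
        ← mul_assoc, mul_comm RatFunc.X (φ e), mul_assoc, ha i, mul_add]
    have hPC : ∀ i, ((C.map Polynomial.C) *ᵥ P) i = e * dp i := by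
      intro i
      apply phi_inj
      have hmap : φ (((C.map Polynomial.C) *ᵥ P) i) = φ e * (mc C *ᵥ g) i := by
        simp only [Matrix.mulVec, dotProduct, map_sum, mc_eq, Matrix.map_apply]
        rw [Finset.mul_sum]
        refine Finset.sum_congr rfl fun j _ => ?_
        rw [_root_.map_mul, ← hP j]
        ring
      rw [hmap, hb i, _root_.map_mul]
    -- evaluate at λ
    set Pl : Fin n → ℂ := fun i => (P i).eval lam with hPl
    have hevalA : A *ᵥ Pl = lam • Pl := by
      funext i
      have := congrArg (Polynomial.eval lam) (hPA i)
      simp only [Polynomial.eval_mul, Polynomial.eval_add, Polynomial.eval_X,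
        Matrix.mulVec, dotProduct, Polynomial.eval_finset_sum, Matrix.map_apply,
        Polynomial.eval_C, hlam.eq_zero, zero_mul, add_zero] at this
      simpa [Matrix.mulVec, dotProduct, Pl, Pi.smul_apply, smul_eq_mul,
        mul_comm] using this.symm
    have hevalC : C *ᵥ Pl = 0 := by
      funext i
      have := congrArg (Polynomial.eval lam) (hPC i)
      simp only [Polynomial.eval_mul, hlam.eq_zero, zero_mul,
        Matrix.mulVec, dotProduct, Polynomial.eval_finset_sum, Matrix.map_apply,
        Polynomial.eval_C] at this
      simpa [Matrix.mulVec, dotProduct, Pl] using this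
    have hpow : ∀ m : ℕ, (A ^ m) *ᵥ Pl = (lam ^ m) • Pl := by
      intro m
      induction m with
      | zero => simp [Matrix.one_mulVec]
      | succ m ihm =>
        rw [pow_succ', pow_succ', ← Matrix.mulVec_mulVec, ihm, Matrix.mulVec_smul, hevalA,
          smul_smul, mul_comm lam (lam ^ m)]
    have hPl0 : Pl = 0 := by
      apply hobs
      intro m
      rw [hpow m, Matrix.mulVec_smul, hevalC, smul_zero]
    -- divide out the root
    have hroot : ∀ i, (Polynomial.X - Polynomial.C lam) * (P i /ₘ (Polynomial.X - Polynomial.C lam)) = P i := by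
      intro i
      apply Polynomial.mul_divByMonic_eq_iff_isRoot.mpr
      have : Pl i = 0 := by rw [hPl0]; rfl
      exact this
    set Q : Fin n → Polynomial ℂ := fun i => P i /ₘ (Polynomial.X - Polynomial.C lam) with hQ
    have hfQ : ∀ i, φ f * g i = φ (Q i) := by
      intro i
      have hXC0 : φ (Polynomial.X - Polynomial.C lam) ≠ 0 := by
        intro hc
        exact hXCm.ne_zero (phi_inj (by rwa [map_zero]))
      apply mul_left_cancel₀ hXC0
      rw [← _root_.map_mul, ← mul_assoc, ← _root_.map_mul, ← hf, hP i, ← hroot i]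
    exact ih f Q hfm hfdeg hfQ

end Stmt5Aux

open Stmt5Aux Polynomial in
/-- if `F h = 0` for a polynomial vector `h` and `(C,A)` is observable, then
`g = (zI−A)⁻¹ B h` is a polynomial vector of degree at most `deg h − 1`. -/
theorem stmt5 {n p q : ℕ}
    (A : Matrix (Fin n) (Fin n) ℂ) (B : Matrix (Fin n) (Fin q) ℂ)
    (C : Matrix (Fin p) (Fin n) ℂ) (D : Matrix (Fin p) (Fin q) ℂ)
    (hobs : Observable C A)
    (h : Fin q → Polynomial ℂ)
    (hker : (mc D + mc C * res A * mc B) *ᵥ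
      (fun i => algebraMap (Polynomial ℂ) (RatFunc ℂ) (h i)) = 0) :
    ∃ g : Fin n → Polynomial ℂ,
      (res A *ᵥ (mc B *ᵥ fun i => algebraMap (Polynomial ℂ) (RatFunc ℂ) (h i))
          = fun i => algebraMap (Polynomial ℂ) (RatFunc ℂ) (g i)) ∧
      ∀ i, (g i).degree + 1 ≤ Finset.univ.sup fun j => (h j).degree := by
  classical
  set hvec : Fin q → RatFunc ℂ := fun i => φ (h i) with hhvec
  set M : Matrix (Fin n) (Fin n) (RatFunc ℂ) :=
    Matrix.scalar (Fin n) (RatFunc.X : RatFunc ℂ) - mc A with hM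
  have hMmap : (charmatrix A).map φ = M := charmatrix_map A
  have hdetM : M.det = φ A.charpoly := by
    rw [← hMmap, ← RingHom.mapMatrix_apply, ← RingHom.map_det]
    rfl
  have hcp0 : φ A.charpoly ≠ 0 := by
    intro hc
    exact (charpoly_monic A).ne_zero (phi_inj (by rwa [map_zero]))
  have hdet0 : IsUnit M.det := isUnit_iff_ne_zero.mpr (hdetM ▸ hcp0)
  set bp : Fin n → Polynomial ℂ := (B.map Polynomial.C) *ᵥ h with hbp
  have hw : mc B *ᵥ hvec = fun i => φ (bp i) := by
    rw [mc_eq]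
    exact map_mulVec _ _
  set g : Fin n → RatFunc ℂ := res A *ᵥ (mc B *ᵥ hvec) with hg
  have hresM : res A = M⁻¹ := rfl
  -- (a) : M *ᵥ g = mc B *ᵥ hvec
  have hMg : M *ᵥ g = mc B *ᵥ hvec := by
    rw [hg, hresM, Matrix.mulVec_mulVec, Matrix.mul_nonsing_inv M hdet0, Matrix.one_mulVec]
  have ha : ∀ i, RatFunc.X * g i = (mc A *ᵥ g) i + φ (bp i) := by
    intro i
    have h1 : (M *ᵥ g) i = RatFunc.X * g i - (mc A *ᵥ g) i := by
      rw [hM, Matrix.sub_mulVec]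
      simp [Matrix.scalar, Matrix.mulVec_diagonal]
    have h2 : (M *ᵥ g) i = φ (bp i) := by rw [hMg, hw]
    rw [h1] at h2
    linear_combination (norm := ring_nf) h2
  -- (b) : mc C *ᵥ g is polynomial
  set dp : Fin p → Polynomial ℂ := -((D.map Polynomial.C) *ᵥ h) with hdp
  have hb : ∀ i, (mc C *ᵥ g) i = φ (dp i) := by
    have hCg : mc C *ᵥ g = (mc C * res A * mc B) *ᵥ hvec := by
      rw [hg, Matrix.mulVec_mulVec, Matrix.mulVec_mulVec]
    have hD : mc D *ᵥ hvec = fun i => φ (((D.map Polynomial.C) *ᵥ h) i) := by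
      rw [mc_eq]; exact map_mulVec _ _
    have h0 : mc D *ᵥ hvec + (mc C * res A * mc B) *ᵥ hvec = 0 := by
      rw [← Matrix.add_mulVec]; exact hker
    intro i
    have : (mc C *ᵥ g) i = -((mc D *ᵥ hvec) i) := by
      rw [hCg]
      have := congrFun h0 i
      simp only [Pi.add_apply, Pi.zero_apply] at this
      linear_combination this
    rw [this, hD]
    simp [hdp]
  -- (c) : charpoly • g is polynomial
  set P0 : Fin n → Polynomial ℂ := (charmatrix A).adjugate *ᵥ bp with hP0
  have hc : ∀ i, φ A.charpoly * g i = φ (P0 i) := by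
    have hadj : M.adjugate = ((charmatrix A).adjugate).map φ := by
      rw [← hMmap, ← RingHom.mapMatrix_apply (f := φ), ← RingHom.map_adjugate]
      rfl
    have h5 : M.adjugate *ᵥ (M *ᵥ g) = M.det • g := by
      rw [Matrix.mulVec_mulVec, Matrix.adjugate_mul, Matrix.smul_mulVec,
        Matrix.one_mulVec]
    have h6 : M.adjugate *ᵥ (M *ᵥ g) = fun i => φ (P0 i) := by
      rw [hMg, hadj, hw, map_mulVec]
    intro i
    have := congrFun (h6 ▸ h5) i
    rw [this, Pi.smul_apply, smul_eq_mul, hdetM]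
  -- apply the key lemma
  obtain ⟨gp, hgp⟩ := key hobs g bp dp ha hb A.charpoly.natDegree A.charpoly P0
    (charpoly_monic A) rfl hc
  refine ⟨gp, ?_, ?_⟩
  · funext i; exact hgp i
  · -- degree bound
    set S : WithBot ℕ := Finset.univ.sup fun j => (h j).degree with hS
    -- polynomial version of (a)
    have hpa : ∀ i, Polynomial.X * gp i = ((A.map Polynomial.C) *ᵥ gp) i + bp i := by
      intro i
      apply phi_inj
      have hmap : φ (((A.map Polynomial.C) *ᵥ gp) i) = (mc A *ᵥ g) i := by
        simp only [Matrix.mulVec, dotProduct, map_sum, mc_eq, Matrix.map_apply]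
        refine Finset.sum_congr rfl fun j _ => ?_
        rw [_root_.map_mul, ← hgp j]
      rw [_root_.map_mul, _root_.map_add, hmap, RatFunc.algebraMap_X, ← hgp i, ha i]
    have hbpdeg : ∀ i, (bp i).degree ≤ S := by
      intro i
      rw [hbp]
      simp only [Matrix.mulVec, dotProduct, Matrix.map_apply]
      refine le_trans (Polynomial.degree_sum_le _ _) ?_
      refine Finset.sup_le fun j _ => ?_
      calc (Polynomial.C (B i j) * h j).degree
          ≤ _ := Polynomial.degree_mul_le _ _
        _ ≤ 0 + (h j).degree := add_le_add Polynomial.degree_C_le le_rfl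
        _ = (h j).degree := by rw [zero_add]
        _ ≤ S := hS ▸ Finset.le_sup (f := fun j => (h j).degree) (Finset.mem_univ j)
    by_cases hall : ∀ i, gp i = 0
    · intro i
      rw [hall i, Polynomial.degree_zero]
      exact le_trans (by simp) bot_le
    · push_neg at hall
      obtain ⟨i0, hi0⟩ := hall
      set Md : WithBot ℕ := Finset.univ.sup fun j => (gp j).degree with hMd
      obtain ⟨i1, _, hi1⟩ := Finset.exists_mem_eq_sup Finset.univ ⟨i0, Finset.mem_univ i0⟩
        fun j => (gp j).degree
      have hgp1ne : gp i1 ≠ 0 := by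
        intro hc
        have hbot : Md = ⊥ := by rw [hMd, hi1, hc, Polynomial.degree_zero]
        have h2 : (gp i0).degree ≤ Md := hMd ▸ Finset.le_sup (f := fun j => (gp j).degree) (Finset.mem_univ i0)
        rw [hbot, le_bot_iff, Polynomial.degree_eq_bot] at h2
        exact hi0 h2
      obtain ⟨m, hm⟩ : ∃ m : ℕ, (gp i1).degree = m :=
        ⟨(gp i1).natDegree, Polynomial.degree_eq_natDegree hgp1ne⟩
      have hXdeg : (Polynomial.X * gp i1).degree = 1 + (gp i1).degree := by
        rw [Polynomial.degree_mul, Polynomial.degree_X]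
      have hAgp : Polynomial.degree (((A.map Polynomial.C) *ᵥ gp) i1)
          < (Polynomial.X * gp i1).degree := by
        have hAle : Polynomial.degree (((A.map Polynomial.C) *ᵥ gp) i1) ≤ Md := by
          simp only [Matrix.mulVec, dotProduct, Matrix.map_apply]
          refine le_trans (Polynomial.degree_sum_le _ _) ?_
          refine Finset.sup_le fun j _ => ?_
          calc (Polynomial.C (A i1 j) * gp j).degree
              ≤ _ := Polynomial.degree_mul_le _ _
            _ ≤ 0 + (gp j).degree := add_le_add Polynomial.degree_C_le le_rfl
            _ = (gp j).degree := by rw [zero_add]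
            _ ≤ Md := hMd ▸ Finset.le_sup (f := fun j => (gp j).degree) (Finset.mem_univ j)
        have hMdlt : Md < (Polynomial.X * gp i1).degree :=
          calc Md = ((m : ℕ) : WithBot ℕ) := by rw [hMd, hi1, hm]
          _ < ((m + 1 : ℕ) : WithBot ℕ) := by exact_mod_cast Nat.lt_succ_self m
          _ = 1 + (gp i1).degree := by rw [hm]; push_cast; rw [add_comm]
          _ = (Polynomial.X * gp i1).degree := hXdeg.symm
        exact lt_of_le_of_lt hAle hMdlt
      have hbpeq : (bp i1).degree = (Polynomial.X * gp i1).degree := by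
        have : bp i1 = Polynomial.X * gp i1 - ((A.map Polynomial.C) *ᵥ gp) i1 := by
          rw [hpa i1]; ring
        rw [this, Polynomial.degree_sub_eq_left_of_degree_lt hAgp]
      have hfin : (Polynomial.X * gp i1).degree ≤ S := hbpeq ▸ hbpdeg i1
      intro i
      have h1 : (gp i).degree ≤ Md := hMd ▸ Finset.le_sup (f := fun j => (gp j).degree) (Finset.mem_univ i)
      have h2 : Md + 1 = (Polynomial.X * gp i1).degree := by
        rw [hXdeg, hMd, hi1, add_comm]
      calc (gp i).degree + 1 ≤ Md + 1 := add_le_add h1 le_rfl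
        _ = (Polynomial.X * gp i1).degree := h2
        _ ≤ S := hfin
end
end

section
/- Suppose [D + C(zI−A)^{-1}B]·[H(zI−Λ)^{-1}G] = −C(zI−A)^{-1}S holds as an identity of rational matrix functions, where (C,A) is observable and (Λ,G) is controllable. Then there exists a matrix Π with AΠ + BH = ΠΛ, CΠ + DH = 0, and ΠG = S. -/
open Matrix

noncomputable section

/-!
Expanding at `z = ∞`, `(zI - A)⁻¹ = ∑ₖ Aᵏ z⁻ᵏ⁻¹`, and comparing the coefficients of `z⁻ᵏ⁻¹`
turns the rational identity into `C Mₖ + D H Λᵏ G = 0` for the sequence `M₀ = S`,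
`Mₖ₊₁ = A Mₖ + B H Λᵏ G`. Every linear relation among the columns of the `Λᵏ G` also holds
among the columns of the `Mₖ`: the combinations `∑ Mₖ cₖ` with `∑ Λᵏ G cₖ = 0` form an
`A`-invariant subspace of `ker C`, which vanishes by observability. Hence some `Π` satisfies
`Π Λᵏ G = Mₖ` for all `k`, and the three equations hold because, by controllability, they
only need to be checked against the `Λᵏ G`.
-/

open scoped LaurentSeries PowerSeries

theorem PowerSeries.transcendental_X {R : Type*} [CommRing R] [Nontrivial R] :
    Transcendental R (X : R⟦X⟧) := by
  have := (isAlgebraic_algHom_iff (Polynomial.coeToPowerSeries.algHom R)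
    (fun p q h ↦ by simpa using h)).not.mpr (Polynomial.transcendental_X R)
  simpa [Transcendental] using this

theorem LaurentSeries.transcendental_inv_coe_X {K : Type*} [Field K] :
    Transcendental K ((PowerSeries.X : K⟦X⟧) : K⸨X⸩)⁻¹ := by
  rw [Transcendental, IsAlgebraic.inv_iff, ← Transcendental]
  refine PowerSeries.transcendental_X.ringHom_of_comp_eq (RingHom.id K)
    (HahnSeries.ofPowerSeries ℤ K) Function.surjective_id HahnSeries.ofPowerSeries_injective ?_
  ext a
  simp [LaurentSeries.algebraMap_apply]

namespace RatFunc

variable {K : Type*} [Field K]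

/-- The Laurent expansion at infinity: the variable of the Laurent series stands for `X⁻¹`. -/
def expandAtInfty : RatFunc K →+* K⸨X⸩ :=
  IsFractionRing.lift <|
    transcendental_iff_injective.mp (LaurentSeries.transcendental_inv_coe_X (K := K))

theorem expandAtInfty_X : expandAtInfty (X : RatFunc K) = ((PowerSeries.X : K⟦X⟧) : K⸨X⸩)⁻¹ := by
  rw [expandAtInfty, ← algebraMap_X, IsFractionRing.lift_algebraMap]
  simp

theorem expandAtInfty_C (a : K) :
    expandAtInfty (C a) = ((PowerSeries.C a : K⟦X⟧) : K⸨X⸩) := by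
  rw [expandAtInfty, ← algebraMap_C, IsFractionRing.lift_algebraMap]
  simp [LaurentSeries.algebraMap_apply]

end RatFunc

namespace Matrix

open PowerSeries

variable {R : Type*} [CommRing R] {l m n : Type*}

theorem ext_map_coeff {M N : Matrix l m R⟦X⟧} (h : ∀ k, M.map (coeff k) = N.map (coeff k)) :
    M = N := by
  ext i j k
  exact congrFun₂ (h k) i j

theorem map_coeff_add (M N : Matrix l m R⟦X⟧) (k : ℕ) :
    (M + N).map (coeff k) = M.map (coeff k) + N.map (coeff k) :=
  Matrix.map_add _ (_root_.map_add _) M N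

theorem map_coeff_map_C (U : Matrix l m R) (k : ℕ) :
    (U.map C).map (coeff k) = if k = 0 then U else 0 := by
  ext i j
  split_ifs <;> simp [coeff_C, *]

theorem map_coeff_map_C_mul [Fintype m] (U : Matrix l m R) (N : Matrix m n R⟦X⟧) (k : ℕ) :
    (U.map C * N).map (coeff k) = U * N.map (coeff k) := by
  ext i j
  simp [mul_apply, coeff_C_mul]

theorem map_coeff_mul_map_C [Fintype m] (N : Matrix l m R⟦X⟧) (U : Matrix m n R) (k : ℕ) :
    (N * U.map C).map (coeff k) = N.map (coeff k) * U := by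
  ext i j
  simp [mul_apply, coeff_mul_C]

theorem map_coeff_map_C_mul_mul_map_C {o : Type*} [Fintype m] [Fintype n] (U : Matrix l m R)
    (N : Matrix m n R⟦X⟧) (V : Matrix n o R) (k : ℕ) :
    (U.map C * N * V.map C).map (coeff k) = U * N.map (coeff k) * V := by
  rw [map_coeff_mul_map_C, map_coeff_map_C_mul]

theorem map_coeff_zero_X_smul (N : Matrix l m R⟦X⟧) : ((X : R⟦X⟧) • N).map (coeff 0) = 0 := by
  ext i j
  simp

theorem map_coeff_succ_X_smul (N : Matrix l m R⟦X⟧) (k : ℕ) :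
    ((X : R⟦X⟧) • N).map (coeff (k + 1)) = N.map (coeff k) := by
  ext i j
  simp [coeff_succ_X_mul]

variable [Fintype m] [DecidableEq m]

/-- The power series expansion of `(1 - X M)⁻¹`. -/
def geomSeries (M : Matrix m m R) : Matrix m m R⟦X⟧ :=
  of fun i j ↦ mk fun k ↦ (M ^ k) i j

theorem map_coeff_geomSeries (M : Matrix m m R) (k : ℕ) :
    (geomSeries M).map (coeff k) = M ^ k := by
  ext i j
  simp [geomSeries]

theorem geomSeries_eq (M : Matrix m m R) :
    geomSeries M = 1 + (X : R⟦X⟧) • (M.map C * geomSeries M) := by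
  refine ext_map_coeff fun k ↦ ?_
  rw [map_coeff_add, ← Matrix.map_one C (map_zero _) (_root_.map_one _), map_coeff_map_C,
    map_coeff_geomSeries]
  rcases k with _ | k
  · rw [map_coeff_zero_X_smul, add_zero, pow_zero, if_pos rfl]
  · rw [map_coeff_succ_X_smul, map_coeff_map_C_mul, map_coeff_geomSeries, if_neg k.succ_ne_zero,
      zero_add, pow_succ']

theorem map_coeff_succ_X_smul_geomSeries (M : Matrix m m R) (k : ℕ) :
    ((X : R⟦X⟧) • M.geomSeries).map (coeff (k + 1)) = M ^ k := by
  rw [map_coeff_succ_X_smul, map_coeff_geomSeries]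

end Matrix

section Transfer

open PowerSeries
open RatFunc (expandAtInfty expandAtInfty_X expandAtInfty_C)

theorem mc_map_expandAtInfty {a b : ℕ} (M : Matrix (Fin a) (Fin b) ℂ) :
    (mc M).map expandAtInfty = (M.map C).map (HahnSeries.ofPowerSeries ℤ ℂ) := by
  ext i j
  simp [mc, expandAtInfty_C]

theorem res_map_expandAtInfty {a : ℕ} (M : Matrix (Fin a) (Fin a) ℂ) :
    (res M).map expandAtInfty =
      ((X : ℂ⟦X⟧) • geomSeries M).map (HahnSeries.ofPowerSeries ℤ ℂ) := by
  set ψ := HahnSeries.ofPowerSeries ℤ ℂ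
  set U := scalar (Fin a) (RatFunc.X : RatFunc ℂ) - mc M
  set V := ((X : ℂ⟦X⟧) • geomSeries M).map ψ
  have hψX : ψ X ≠ 0 := by simp [ψ]
  have hU : U.map expandAtInfty =
      (ψ X)⁻¹ • (1 : Matrix (Fin a) (Fin a) ℂ⸨X⸩) - (M.map C).map ψ := by
    ext i j
    by_cases h : i = j <;> simp [U, mc, expandAtInfty_X, expandAtInfty_C, one_apply, h, ψ]
  have hV : V = ψ X • (geomSeries M).map ψ := by
    ext i j
    simp [V]
  have hg : (geomSeries M).map ψ = 1 + ψ X • ((M.map C).map ψ * (geomSeries M).map ψ) := by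
    conv_lhs => rw [geomSeries_eq]
    rw [Matrix.map_add _ (map_add ψ), Matrix.map_one _ (map_zero ψ) (map_one ψ), ← Matrix.map_mul]
    congr 1
    ext i j : 1
    simp only [map_apply, Matrix.smul_apply, smul_eq_mul, map_mul]
  have hUV : U.map expandAtInfty * V = 1 := by
    rw [hU, hV, sub_mul, smul_mul_assoc, one_mul, smul_smul, inv_mul_cancel₀ hψX, one_smul,
      mul_smul_comm, sub_eq_iff_eq_add, ← hg]
  have hdet : IsUnit U.det := by
    have hmap : (U.map expandAtInfty).det = expandAtInfty U.det := (RingHom.map_det _ _).symm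
    refine isUnit_iff_ne_zero.mpr fun h0 ↦ zero_ne_one (α := ℂ⸨X⸩) ?_
    rw [← det_one (n := Fin a), ← hUV, det_mul, hmap, h0, map_zero, zero_mul]
  calc (res M).map expandAtInfty = (res M).map expandAtInfty * (U.map expandAtInfty * V) := by
        rw [hUV, mul_one]
    _ = (res M * U).map expandAtInfty * V := by rw [Matrix.map_mul, mul_assoc]
    _ = V := by rw [res, nonsing_inv_mul _ hdet, Matrix.map_one _ (map_zero _) (map_one _), one_mul]

end Transfer

section StateSequence

open PowerSeries

local notation "⌜" U "⌝" => Matrix.map U PowerSeries.C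

variable {R : Type*} [CommRing R] {n p q r m : Type*} [Fintype n] [DecidableEq n] [Fintype q]
  [Fintype r] [DecidableEq r]
  (A : Matrix n n R) (B : Matrix n q R) (C : Matrix p n R) (D : Matrix p q R)
  (H : Matrix q r R) (Λ : Matrix r r R) (G : Matrix r m R) (S : Matrix n m R)

/-- The values that a solution `Π` is forced to take on the Krylov matrices: `Π Λᵏ G = Mₖ`. -/
def stateSeq : ℕ → Matrix n m R
  | 0 => S
  | k + 1 => A * stateSeq k + B * H * Λ ^ k * G

/-- `(zI - A)⁻¹ (S + B H (zI - Λ)⁻¹ G)`, expanded in powers of `z⁻¹`, has the coefficients `Mₖ`. -/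
theorem map_coeff_succ_eq_stateSeq (k : ℕ) :
    (((X : R⟦X⟧) • A.geomSeries) * (⌜S⌝ + ⌜B⌝ * ⌜H⌝ * ((X : R⟦X⟧) • Λ.geomSeries)
      * ⌜G⌝)).map (coeff (k + 1)) = stateSeq A B H Λ G S k := by
  set Y := ⌜S⌝ + ⌜B⌝ * ⌜H⌝ * ((X : R⟦X⟧) • Λ.geomSeries) * ⌜G⌝
  set N := ((X : R⟦X⟧) • A.geomSeries) * Y
  have hN : N = (X : R⟦X⟧) • (Y + ⌜A⌝ * N) := by
    conv_lhs => rw [show N = (X : R⟦X⟧) • A.geomSeries * Y from rfl, A.geomSeries_eq]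
    simp only [N, Matrix.smul_mul, Matrix.mul_smul, Matrix.add_mul, Matrix.one_mul,
      Matrix.mul_assoc]
  have hY : ∀ k, Y.map (coeff k) = (if k = 0 then S else 0) +
      B * H * ((X : R⟦X⟧) • Λ.geomSeries).map (coeff k) * G := fun k ↦ by
    rw [map_coeff_add, map_coeff_map_C, ← Matrix.map_mul, map_coeff_map_C_mul_mul_map_C]
  induction k with
  | zero =>
    rw [hN, map_coeff_succ_X_smul, map_coeff_add, map_coeff_map_C_mul, hY,
      show N.map (coeff 0) = 0 by rw [hN, map_coeff_zero_X_smul], map_coeff_zero_X_smul]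
    simp [stateSeq]
  | succ k ih =>
    rw [hN, map_coeff_succ_X_smul, map_coeff_add, map_coeff_map_C_mul, ih, hY,
      map_coeff_succ_X_smul_geomSeries, if_neg k.succ_ne_zero, zero_add, stateSeq, add_comm]

theorem mul_stateSeq_add_eq_zero
    (hPS : (⌜D⌝ + ⌜C⌝ * ((X : R⟦X⟧) • A.geomSeries) * ⌜B⌝)
        * (⌜H⌝ * ((X : R⟦X⟧) • Λ.geomSeries) * ⌜G⌝)
      = -(⌜C⌝ * ((X : R⟦X⟧) • A.geomSeries) * ⌜S⌝)) (k : ℕ) :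
    C * stateSeq A B H Λ G S k + D * H * Λ ^ k * G = 0 := by
  set P := (X : R⟦X⟧) • Λ.geomSeries
  set Q := (X : R⟦X⟧) • A.geomSeries
  have h : ⌜C⌝ * (Q * (⌜S⌝ + ⌜B⌝ * ⌜H⌝ * P * ⌜G⌝)) + ⌜D * H⌝ * P * ⌜G⌝ = 0 :=
    calc _ = (⌜D⌝ + ⌜C⌝ * Q * ⌜B⌝) * (⌜H⌝ * P * ⌜G⌝) + ⌜C⌝ * Q * ⌜S⌝ := by
          simp only [Matrix.map_mul, Matrix.mul_add, Matrix.add_mul, Matrix.mul_assoc]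
          abel
      _ = 0 := by rw [hPS, neg_add_cancel]
  have := congrArg (·.map (coeff (k + 1))) h
  rwa [map_coeff_add, map_coeff_map_C_mul, map_coeff_succ_eq_stateSeq,
    map_coeff_map_C_mul_mul_map_C, map_coeff_succ_X_smul_geomSeries,
    Matrix.map_zero _ (map_zero _)] at this

end StateSequence

theorem LinearMap.exists_comp_eq_of_ker_le {K V W U : Type*} [DivisionRing K] [AddCommGroup V]
    [Module K V] [AddCommGroup W] [Module K W] [AddCommGroup U] [Module K U]
    (f : V →ₗ[K] W) (g : V →ₗ[K] U) (h : ker f ≤ ker g) : ∃ φ : W →ₗ[K] U, φ ∘ₗ f = g := by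
  obtain ⟨φ, hφ⟩ := IsSemisimpleModule.extension_property ((ker f).liftQ f le_rfl)
    (ker_eq_bot.mp ((ker f).ker_liftQ_eq_bot f le_rfl le_rfl)) ((ker f).liftQ g h)
  refine ⟨φ, ?_⟩
  simpa [comp_assoc] using congrArg (· ∘ₗ (ker f).mkQ) hφ

namespace Matrix

section LsumMulVec

variable {R : Type*} [CommRing R] {ι l m n : Type*} [Fintype m]

def lsumMulVec (M : ι → Matrix n m R) : (ι →₀ (m → R)) →ₗ[R] n → R :=
  Finsupp.lsum R fun k ↦ (M k).mulVecLin

theorem lsumMulVec_single (M : ι → Matrix n m R) (k : ι) (v : m → R) :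
    lsumMulVec M (Finsupp.single k v) = M k *ᵥ v := by
  simp [lsumMulVec]

theorem lsumMulVec_comp_lmapDomain {κ : Type*} (M : κ → Matrix n m R) (e : ι → κ) :
    lsumMulVec M ∘ₗ Finsupp.lmapDomain (m → R) R e = lsumMulVec (M ∘ e) := by
  ext k v : 2
  simp [lsumMulVec_single]

theorem mulVecLin_comp_lsumMulVec [Fintype n] (U : Matrix l n R) (M : ι → Matrix n m R) :
    U.mulVecLin ∘ₗ lsumMulVec M = lsumMulVec fun k ↦ U * M k := by
  ext k v : 2
  simp [lsumMulVec_single, mulVec_mulVec]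

theorem lsumMulVec_add (M N : ι → Matrix n m R) :
    lsumMulVec (M + N) = lsumMulVec M + lsumMulVec N := by
  ext k v : 2
  simp [lsumMulVec_single, add_mulVec]

theorem lsumMulVec_neg (M : ι → Matrix n m R) : lsumMulVec (-M) = -lsumMulVec M := by
  ext k v : 2
  simp [lsumMulVec_single, neg_mulVec]

theorem exists_mul_eq_of_ker_lsumMulVec_le {K : Type*} [Field K] [Fintype n] [DecidableEq n]
    [DecidableEq m] (P : ι → Matrix n m K) (M : ι → Matrix l m K)
    (h : LinearMap.ker (lsumMulVec P) ≤ LinearMap.ker (lsumMulVec M)) :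
    ∃ T : Matrix l n K, ∀ k, T * P k = M k := by
  obtain ⟨φ, hφ⟩ := LinearMap.exists_comp_eq_of_ker_le _ _ h
  refine ⟨LinearMap.toMatrix' φ, fun k ↦ toLin'.injective (LinearMap.ext fun v ↦ ?_)⟩
  simpa [← mulVec_mulVec, lsumMulVec_single] using congrArg (· (Finsupp.single k v)) hφ

end LsumMulVec

end Matrix

theorem Observable.eq_zero_of_mem {p n : ℕ} {C : Matrix (Fin p) (Fin n) ℂ}
    {A : Matrix (Fin n) (Fin n) ℂ} (hobs : Observable C A) {s : Set (Fin n → ℂ)}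
    (hA : ∀ x ∈ s, A *ᵥ x ∈ s) (hC : ∀ x ∈ s, C *ᵥ x = 0) {x : Fin n → ℂ} (hx : x ∈ s) :
    x = 0 := by
  refine hobs x fun k ↦ hC _ ?_
  induction k with
  | zero => simpa using hx
  | succ k ih => simpa [pow_succ', ← mulVec_mulVec] using hA _ ih

theorem Controllable.ext {r m p : ℕ} {L : Matrix (Fin r) (Fin r) ℂ} {G : Matrix (Fin r) (Fin m) ℂ}
    (hctrb : Controllable L G) {X Y : Matrix (Fin p) (Fin r) ℂ}
    (h : ∀ k, X * (L ^ k * G) = Y * (L ^ k * G)) : X = Y := by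
  funext i
  rw [← sub_eq_zero]
  refine hctrb _ fun k ↦ ?_
  rw [sub_vecMul, ← mul_apply_eq_vecMul, ← mul_apply_eq_vecMul, h, sub_self]

theorem Observable.ker_lsumMulVec_le {n p q r m : ℕ} {A : Matrix (Fin n) (Fin n) ℂ}
    {B : Matrix (Fin n) (Fin q) ℂ} {C : Matrix (Fin p) (Fin n) ℂ} {D : Matrix (Fin p) (Fin q) ℂ}
    {H : Matrix (Fin q) (Fin r) ℂ} {Λ : Matrix (Fin r) (Fin r) ℂ} {G : Matrix (Fin r) (Fin m) ℂ}
    {S : Matrix (Fin n) (Fin m) ℂ} (hobs : Observable C A)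
    (hout : ∀ k, C * stateSeq A B H Λ G S k + D * H * Λ ^ k * G = 0) :
    LinearMap.ker (lsumMulVec fun k ↦ Λ ^ k * G) ≤
      LinearMap.ker (lsumMulVec (stateSeq A B H Λ G S)) := by
  set f := lsumMulVec fun k ↦ Λ ^ k * G
  set g := lsumMulVec (stateSeq A B H Λ G S)
  set σ := Finsupp.lmapDomain (Fin m → ℂ) ℂ Nat.succ
  have hf : f ∘ₗ σ = Λ.mulVecLin ∘ₗ f := by
    rw [lsumMulVec_comp_lmapDomain, mulVecLin_comp_lsumMulVec]
    simp only [Function.comp_def, pow_succ', Matrix.mul_assoc]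
  have hg : g ∘ₗ σ = A.mulVecLin ∘ₗ g + (B * H).mulVecLin ∘ₗ f := by
    rw [lsumMulVec_comp_lmapDomain, mulVecLin_comp_lsumMulVec, mulVecLin_comp_lsumMulVec,
      ← lsumMulVec_add]
    congr 1
    ext1 k
    simp [stateSeq, Matrix.mul_assoc]
  have hC : C.mulVecLin ∘ₗ g = -((D * H).mulVecLin ∘ₗ f) := by
    rw [mulVecLin_comp_lsumMulVec, mulVecLin_comp_lsumMulVec, ← lsumMulVec_neg]
    congr 1
    ext1 k
    simpa [Matrix.mul_assoc, eq_neg_iff_add_eq_zero] using hout k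
  intro c hc
  rw [LinearMap.mem_ker] at hc ⊢
  refine hobs.eq_zero_of_mem (s := g '' LinearMap.ker f) ?_ ?_ ⟨c, hc, rfl⟩
  · rintro _ ⟨c, hc, rfl⟩
    rw [SetLike.mem_coe, LinearMap.mem_ker] at hc
    refine ⟨σ c, ?_, ?_⟩
    · simpa [hc] using LinearMap.congr_fun hf c
    · simpa [hc] using LinearMap.congr_fun hg c
  · rintro _ ⟨c, hc, rfl⟩
    rw [SetLike.mem_coe, LinearMap.mem_ker] at hc
    simpa [hc] using LinearMap.congr_fun hC c

/-- from the rational identity `F · H(zI−Λ)⁻¹G = −C(zI−A)⁻¹S` with `(C,A)`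
observable and `(Λ,G)` controllable one obtains `Π` with `AΠ+BH=ΠΛ`, `CΠ+DH=0`, `ΠG=S`. -/
theorem stmt6 {n p q r m : ℕ}
    (A : Matrix (Fin n) (Fin n) ℂ) (B : Matrix (Fin n) (Fin q) ℂ)
    (C : Matrix (Fin p) (Fin n) ℂ) (D : Matrix (Fin p) (Fin q) ℂ)
    (H : Matrix (Fin q) (Fin r) ℂ) (Λ : Matrix (Fin r) (Fin r) ℂ)
    (G : Matrix (Fin r) (Fin m) ℂ) (S : Matrix (Fin n) (Fin m) ℂ)
    (hobs : Observable C A) (hctrb : Controllable Λ G)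
    (hid : (mc D + mc C * res A * mc B) * (mc H * res Λ * mc G)
        = -(mc C * res A * mc S)) :
    ∃ Pm : Matrix (Fin n) (Fin r) ℂ,
      A * Pm + B * H = Pm * Λ ∧ C * Pm + D * H = 0 ∧ Pm * G = S := by
  have hout := mul_stateSeq_add_eq_zero A B C D H Λ G S <|
    map_injective (HahnSeries.ofPowerSeries_injective (Γ := ℤ)) <| by
      have := congrArg (·.map RatFunc.expandAtInfty) hid
      simp only [Matrix.map_mul, Matrix.map_add _ (map_add _),
        Matrix.map_neg _ (map_neg RatFunc.expandAtInfty), mc_map_expandAtInfty,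
        res_map_expandAtInfty] at this
      simpa only [Matrix.map_mul, Matrix.map_add _ (map_add _),
        Matrix.map_neg _ (map_neg (HahnSeries.ofPowerSeries ℤ ℂ))]
  obtain ⟨Pm, hPm⟩ := exists_mul_eq_of_ker_lsumMulVec_le _ _ (hobs.ker_lsumMulVec_le hout)
  refine ⟨Pm, hctrb.ext fun k ↦ ?_, hctrb.ext fun k ↦ ?_, by simpa [stateSeq] using hPm 0⟩
  · rw [Matrix.add_mul, Matrix.mul_assoc, hPm, Matrix.mul_assoc Pm, ← Matrix.mul_assoc Λ,
      ← pow_succ', hPm, stateSeq]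
    simp only [Matrix.mul_assoc]
  · rw [Matrix.add_mul, Matrix.mul_assoc, hPm, Matrix.zero_mul, ← hout k]
    simp only [Matrix.mul_assoc]

end
end

section
/- Let (C,A) be observable and let (Π₁,H₁,Λ₁) be a solution of AΠ + BH = ΠΛ, CΠ + DH = 0. If ξ is a vector with H₁ξ = 0 and Λ₁ξ = λξ, then Π₁ξ = 0. Consequently, if Π₁ has trivial kernel then the pair (H₁,Λ₁) is observable. -/
open Matrix

noncomputable section

/-- eigenvectors of `Λ₁` killed by `H₁` are killed by `Π₁`; hence if `Π₁`
has trivial kernel then `(H₁,Λ₁)` is observable. -/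
theorem stmt7 {n p q r : ℕ}
    (A : Matrix (Fin n) (Fin n) ℂ) (B : Matrix (Fin n) (Fin q) ℂ)
    (C : Matrix (Fin p) (Fin n) ℂ) (D : Matrix (Fin p) (Fin q) ℂ)
    (P₁ : Matrix (Fin n) (Fin r) ℂ) (H₁ : Matrix (Fin q) (Fin r) ℂ)
    (Λ₁ : Matrix (Fin r) (Fin r) ℂ)
    (hobs : Observable C A)
    (h1 : A * P₁ + B * H₁ = P₁ * Λ₁) (h2 : C * P₁ + D * H₁ = 0) :
    (∀ (ξ : Fin r → ℂ) (lam : ℂ), H₁ *ᵥ ξ = 0 → Λ₁ *ᵥ ξ = lam • ξ → P₁ *ᵥ ξ = 0) ∧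
    ((∀ v : Fin r → ℂ, P₁ *ᵥ v = 0 → v = 0) → Observable H₁ Λ₁) := by
  have hAP : A * P₁ = P₁ * Λ₁ - B * H₁ := eq_sub_of_add_eq h1
  have hCP : C * P₁ = -(D * H₁) := eq_neg_of_add_eq_zero_left h2
  have key : ∀ (ξ : Fin r → ℂ), (∀ k : ℕ, H₁ *ᵥ ((Λ₁ ^ k) *ᵥ ξ) = 0) → P₁ *ᵥ ξ = 0 := by
    intro ξ hH
    have hA : ∀ k : ℕ, (A ^ k) *ᵥ (P₁ *ᵥ ξ) = P₁ *ᵥ ((Λ₁ ^ k) *ᵥ ξ) := by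
      intro k
      induction k with
      | zero => simp
      | succ k ih =>
        rw [pow_succ', ← Matrix.mulVec_mulVec, ih, Matrix.mulVec_mulVec, hAP,
          Matrix.sub_mulVec, ← Matrix.mulVec_mulVec _ B H₁, hH k,
          Matrix.mulVec_zero, sub_zero, ← Matrix.mulVec_mulVec _ P₁ Λ₁,
          Matrix.mulVec_mulVec ξ Λ₁ (Λ₁ ^ k), ← pow_succ']
    have hC : ∀ k : ℕ, C *ᵥ ((A ^ k) *ᵥ (P₁ *ᵥ ξ)) = 0 := by
      intro k
      rw [hA k, Matrix.mulVec_mulVec, hCP, Matrix.neg_mulVec,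
        ← Matrix.mulVec_mulVec, hH k, Matrix.mulVec_zero, neg_zero]
    exact hobs _ hC
  constructor
  · intro ξ lam hHξ hΛξ
    apply key
    intro k
    have hpow : (Λ₁ ^ k) *ᵥ ξ = lam ^ k • ξ := by
      induction k with
      | zero => simp
      | succ k ih =>
        rw [pow_succ', ← Matrix.mulVec_mulVec, ih, Matrix.mulVec_smul, hΛξ,
          smul_smul, ← pow_succ]
    rw [hpow, Matrix.mulVec_smul, hHξ, smul_zero]
  · intro hker v hv
    exact hker v (key v hv)
end
end

section
/- Let (Λ_k, α_k) be a controllable pair, R₀ a matrix with orthonormal columns (R₀*R₀ = I), and H_k a matrix. Suppose σ is a Hermitian solution of the Riccati equation σ(Λ_k − α_k R₀*H_k) + (Λ_k − α_k R₀*H_k)*σ − σα_kα_k*σ + H_k*(I − R₀R₀*)H_k = 0, and define β_k = −α_k*σ − R₀*H_k. If in addition there is an observable pair (C,A) and matrices Π_k with trivial kernel satisfying AΠ_k + BH_k = Π_kΛ_k, CΠ_k + DH_k = 0, BR₀ = Π_kα_k, DR₀ = 0, then σ is invertible. -/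
open Matrix

noncomputable section

open scoped ComplexOrder in
lemma aux_star_dot_self_zero {k : ℕ} (v : Fin k → ℂ) (h : star v ⬝ᵥ v = 0) : v = 0 :=
  dotProduct_star_self_eq_zero.mp h

/-- any Hermitian solution `σ` of the Riccati equation arising in the inner
kernel construction is invertible. -/
theorem stmt11 {n p q rk m : ℕ}
    (A : Matrix (Fin n) (Fin n) ℂ) (B : Matrix (Fin n) (Fin q) ℂ)
    (C : Matrix (Fin p) (Fin n) ℂ) (D : Matrix (Fin p) (Fin q) ℂ)
    (Λk : Matrix (Fin rk) (Fin rk) ℂ) (αk : Matrix (Fin rk) (Fin m) ℂ)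
    (R₀ : Matrix (Fin q) (Fin m) ℂ) (Hk : Matrix (Fin q) (Fin rk) ℂ)
    (Pk : Matrix (Fin n) (Fin rk) ℂ) (σ : Matrix (Fin rk) (Fin rk) ℂ)
    (βk : Matrix (Fin m) (Fin rk) ℂ)
    (hctrb : Controllable Λk αk)
    (hR : R₀ᴴ * R₀ = 1)
    (hσher : σ.IsHermitian)
    (hric : σ * (Λk - αk * R₀ᴴ * Hk) + (Λk - αk * R₀ᴴ * Hk)ᴴ * σ
        - σ * αk * αkᴴ * σ + Hkᴴ * (1 - R₀ * R₀ᴴ) * Hk = 0)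
    (hβ : βk = -(αkᴴ * σ) - R₀ᴴ * Hk)
    (hobs : Observable C A)
    (hker : ∀ v : Fin rk → ℂ, Pk *ᵥ v = 0 → v = 0)
    (h1 : A * Pk + B * Hk = Pk * Λk) (h2 : C * Pk + D * Hk = 0)
    (hBR : B * R₀ = Pk * αk) (hDR : D * R₀ = 0) :
    IsUnit σ := by
  classical
  set F : Matrix (Fin rk) (Fin rk) ℂ := Λk - αk * R₀ᴴ * Hk with hF
  set E : Matrix (Fin q) (Fin q) ℂ := 1 - R₀ * R₀ᴴ with hE
  have hEher : Eᴴ = E := by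
    rw [hE]; simp [Matrix.conjTranspose_sub, Matrix.conjTranspose_mul]
  have hP : R₀ * R₀ᴴ * (R₀ * R₀ᴴ) = R₀ * R₀ᴴ := by
    rw [← Matrix.mul_assoc, Matrix.mul_assoc R₀ R₀ᴴ R₀, hR, Matrix.mul_one]
  have hEE : E * E = E := by
    rw [hE, Matrix.sub_mul, Matrix.one_mul, Matrix.mul_sub, Matrix.mul_one, hP]
    abel
  have hfact : Hkᴴ * E * Hk = (E * Hk)ᴴ * (E * Hk) := by
    simp only [Matrix.conjTranspose_mul, hEher, Matrix.mul_assoc]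
    rw [← Matrix.mul_assoc E E Hk, hEE]
  -- key invariance lemma: ker σ is F-invariant and (1 - R₀R₀ᴴ)Hk kills it
  have key : ∀ w : Fin rk → ℂ, σ *ᵥ w = 0 →
      σ *ᵥ (F *ᵥ w) = 0 ∧ (E * Hk) *ᵥ w = 0 := by
    intro w hw
    have hσw : star w ᵥ* σ = 0 := by
      have h := Matrix.star_mulVec (M := σ) (v := w)
      rw [hw, hσher.eq] at h
      simpa using h.symm
    have hr := congrArg (fun M => M *ᵥ w) hric
    simp only [Matrix.add_mulVec, Matrix.sub_mulVec, Matrix.zero_mulVec] at hr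
    have t2 : (Fᴴ * σ) *ᵥ w = 0 := by
      rw [← Matrix.mulVec_mulVec, hw, Matrix.mulVec_zero]
    have t3 : (σ * αk * αkᴴ * σ) *ᵥ w = 0 := by
      rw [← Matrix.mulVec_mulVec, hw, Matrix.mulVec_zero]
    rw [t2, t3] at hr
    have hr' : (σ * F) *ᵥ w + (Hkᴴ * E * Hk) *ᵥ w = 0 := by
      simpa using hr
    have hq1 : star w ⬝ᵥ ((σ * F) *ᵥ w) = 0 := by
      rw [← Matrix.mulVec_mulVec, Matrix.dotProduct_mulVec, hσw, zero_dotProduct]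
    have hq2 : star w ⬝ᵥ ((Hkᴴ * E * Hk) *ᵥ w) = 0 := by
      have h0 := congrArg (fun u => star w ⬝ᵥ u) hr'
      simp only [dotProduct_add, dotProduct_zero, hq1, zero_add] at h0
      exact h0
    have hEHw : (E * Hk) *ᵥ w = 0 := by
      rw [hfact, ← Matrix.mulVec_mulVec, Matrix.dotProduct_mulVec,
        ← Matrix.star_mulVec] at hq2
      exact aux_star_dot_self_zero _ hq2
    refine ⟨?_, hEHw⟩
    have hz : (Hkᴴ * E * Hk) *ᵥ w = 0 := by
      rw [Matrix.mul_assoc, ← Matrix.mulVec_mulVec, hEHw, Matrix.mulVec_zero]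
    rw [hz, add_zero, ← Matrix.mulVec_mulVec] at hr'
    exact hr'
  -- the kernel of σ is trivial
  have hkerσ : ∀ v : Fin rk → ℂ, σ *ᵥ v = 0 → v = 0 := by
    intro v hv
    have hσk : ∀ k : ℕ, σ *ᵥ ((F ^ k) *ᵥ v) = 0 := by
      intro k
      induction k with
      | zero => simpa using hv
      | succ k ih =>
        rw [pow_succ', ← Matrix.mulVec_mulVec]
        exact (key _ ih).1
    -- one-step intertwining on ker σ
    have hstep : ∀ w : Fin rk → ℂ, (E * Hk) *ᵥ w = 0 →
        A *ᵥ (Pk *ᵥ w) = Pk *ᵥ (F *ᵥ w) ∧ C *ᵥ (Pk *ᵥ w) = 0 := by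
      intro w hw
      have hHw : Hk *ᵥ w = R₀ *ᵥ ((R₀ᴴ * Hk) *ᵥ w) := by
        have h0 : (E * Hk) *ᵥ w = Hk *ᵥ w - R₀ *ᵥ ((R₀ᴴ * Hk) *ᵥ w) := by
          rw [hE, Matrix.sub_mul, Matrix.one_mul, Matrix.mul_assoc, Matrix.sub_mulVec,
            ← Matrix.mulVec_mulVec]
        rw [h0] at hw
        exact sub_eq_zero.mp hw
      have hBRu : B *ᵥ (R₀ *ᵥ ((R₀ᴴ * Hk) *ᵥ w)) = Pk *ᵥ (αk *ᵥ ((R₀ᴴ * Hk) *ᵥ w)) := by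
        simp only [Matrix.mulVec_mulVec]
        rw [← Matrix.mul_assoc B, hBR, Matrix.mul_assoc]
      have hFw : F *ᵥ w = Λk *ᵥ w - αk *ᵥ ((R₀ᴴ * Hk) *ᵥ w) := by
        rw [hF, Matrix.sub_mulVec, Matrix.mul_assoc, ← Matrix.mulVec_mulVec]
      constructor
      · have h1' : A *ᵥ (Pk *ᵥ w) + B *ᵥ (Hk *ᵥ w) = Pk *ᵥ (Λk *ᵥ w) := by
          have h := congrArg (fun M => M *ᵥ w) h1
          simpa only [Matrix.add_mulVec, Matrix.mulVec_mulVec] using h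
        rw [hFw, Matrix.mulVec_sub, ← h1', hHw, hBRu]
        abel
      · have h2' : C *ᵥ (Pk *ᵥ w) + D *ᵥ (Hk *ᵥ w) = 0 := by
          have h := congrArg (fun M => M *ᵥ w) h2
          simpa only [Matrix.add_mulVec, Matrix.mulVec_mulVec, Matrix.zero_mulVec] using h
        have hDu : D *ᵥ (Hk *ᵥ w) = 0 := by
          rw [hHw, Matrix.mulVec_mulVec, hDR, Matrix.zero_mulVec]
        rw [hDu, add_zero] at h2'
        exact h2'
    have hAk : ∀ k : ℕ, (A ^ k) *ᵥ (Pk *ᵥ v) = Pk *ᵥ ((F ^ k) *ᵥ v) := by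
      intro k
      induction k with
      | zero => simp
      | succ k ih =>
        rw [pow_succ', pow_succ', ← Matrix.mulVec_mulVec, ih,
          ← Matrix.mulVec_mulVec (M := F) (N := F ^ k)]
        exact (hstep _ (key _ (hσk k)).2).1
    have hPv : Pk *ᵥ v = 0 := by
      apply hobs
      intro k
      rw [hAk k]
      exact (hstep _ (key _ (hσk k)).2).2
    exact hker v hPv
  rw [← Matrix.mulVec_injective_iff_isUnit]
  intro x y hxy
  have h0 : σ *ᵥ (x - y) = 0 := by
    rw [Matrix.mulVec_sub, hxy, sub_self]
  exact sub_eq_zero.mp (hkerσ _ h0)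
end
end

section
/- Let (A,B,C,D) define a system Σ and let (Π'_max, H'_max, Λ'_max) be a maximal solution of the left zero equation [Π', H']·[[A,B],[C,D]] = [Λ'Π', 0] (maximal with respect to the row space of Π'). Then ker Π'_max = C*(Σ), the set of states reachable from the origin by a finite input sequence producing identically zero output. -/
/-!
Call a subspace `V` of the state space input-containing if `x ∈ V` and `C x + D u = 0` imply
`A x + B u ∈ V`; `C*(Σ)` is the smallest one. For any solution of the left zero equation,
`Π' (A x + B u) = Λ' Π' x - H' (C x + D u)`, so `ker Π'` is input-containing and contains `C*(Σ)`.
Conversely, for `w ⊥ C*(Σ)` the functional `(u, x) ↦ w (A x + B u)` on `U × C*(Σ)` vanishes on the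
kernel of `(u, x) ↦ C x + D u`, hence factors as `h (C x + D u)`: then `w B + h D = 0` and
`w A + h C ⊥ C*(Σ)`. Stacking such rows over a basis of `C*(Σ)⊥` gives a solution, so by
maximality `C*(Σ)⊥` lies in the row space of `Π'_max`, and `ker Π'_max ⊆ C*(Σ)⊥⊥ = C*(Σ)`.
-/

open Matrix

noncomputable section

section LeftZero

variable {K n p q : Type*} [Field K] [Fintype n] [Fintype p]
  {A : Matrix n n K} {B : Matrix n q K} {C : Matrix p n K} {D : Matrix p q K}

theorem dotProduct_eq_zero_of_mem_span_rows {s : Type*} [Fintype s] {P : Matrix s n K}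
    {w x : n → K} (hw : w ∈ Submodule.span K (Set.range fun i => P i)) (hx : P *ᵥ x = 0) :
    w ⬝ᵥ x = 0 := by
  obtain ⟨c, rfl⟩ := (range_vecMulLinear P ▸ hw :)
  rw [vecMulLinear_apply, ← dotProduct_mulVec, hx, dotProduct_zero]

theorem exists_leftZero_span_rows_eq (W : Submodule K (n → K))
    (hW : ∀ w ∈ W, ∃ h : p → K, w ᵥ* B + h ᵥ* D = 0 ∧ w ᵥ* A + h ᵥ* C ∈ W) :
    ∃ (t : ℕ) (P : Matrix (Fin t) n K) (H : Matrix (Fin t) p K) (L : Matrix (Fin t) (Fin t) K),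
      P * A + H * C = L * P ∧ P * B + H * D = 0 ∧
        Submodule.span K (Set.range fun i => P i) = W := by
  let b := Module.finBasis K W
  choose h hB hA using fun i => hW (b i) (b i).2
  refine ⟨_, of fun i => b i, of h, of fun i => b.repr ⟨_, hA i⟩, ?_, ?_, ?_⟩
  · funext i
    change (b i : n → K) ᵥ* A + h i ᵥ* C = b.repr ⟨_, hA i⟩ ᵥ* of fun j => (b j : n → K)
    have hsum := congrArg Subtype.val (b.sum_repr ⟨_, hA i⟩)
    rw [Submodule.coe_sum] at hsum
    rw [vecMul_eq_sum (b.repr _)]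
    exact hsum.symm
  · funext i
    exact hB i
  · change Submodule.span K (Set.range (W.subtype ∘ b)) = W
    rw [Set.range_comp, Submodule.span_image, b.span_eq, Submodule.map_subtype_top]

variable [Fintype q]

variable (A B C D) in
def IsInputContaining (V : Submodule K (n → K)) : Prop :=
  ∀ x ∈ V, ∀ u, C *ᵥ x + D *ᵥ u = 0 → A *ᵥ x + B *ᵥ u ∈ V

theorem isInputContaining_ker_of_leftZero {s : Type*} [Fintype s] {P : Matrix s n K}
    {H : Matrix s p K} {L : Matrix s s K} (hA : P * A + H * C = L * P) (hB : P * B + H * D = 0) :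
    IsInputContaining A B C D (LinearMap.ker P.mulVecLin) := by
  intro x hx u hu
  rw [LinearMap.mem_ker, mulVecLin_apply] at hx ⊢
  have key : P *ᵥ (A *ᵥ x + B *ᵥ u) + H *ᵥ (C *ᵥ x + D *ᵥ u) = L *ᵥ (P *ᵥ x) := by
    rw [mulVec_mulVec, ← hA, ← zero_add ((P * A + H * C) *ᵥ x), ← zero_mulVec u, ← hB]
    simp only [mulVec_add, add_mulVec, mulVec_mulVec]
    abel
  rwa [hx, hu, mulVec_zero, mulVec_zero, add_zero] at key

variable [DecidableEq n]

def dotAnnihilator (V : Submodule K (n → K)) : Submodule K (n → K) :=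
  V.dualAnnihilator.comap (dotProductEquiv K n).toLinearMap

theorem mem_dotAnnihilator {V : Submodule K (n → K)} {w : n → K} :
    w ∈ dotAnnihilator V ↔ ∀ y ∈ V, w ⬝ᵥ y = 0 := by
  simp [dotAnnihilator]

theorem mem_of_forall_mem_dotAnnihilator {V : Submodule K (n → K)} {x : n → K}
    (hx : ∀ w ∈ dotAnnihilator V, w ⬝ᵥ x = 0) : x ∈ V := by
  rw [← Subspace.forall_mem_dualAnnihilator_apply_eq_zero_iff]
  intro φ hφ
  obtain ⟨w, rfl⟩ := (dotProductEquiv K n).surjective φ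
  exact hx w hφ

variable [DecidableEq p]

theorem IsInputContaining.exists_leftZero_row {V : Submodule K (n → K)}
    (hV : IsInputContaining A B C D V) {w : n → K} (hw : w ∈ dotAnnihilator V) :
    ∃ h : p → K, w ᵥ* B + h ᵥ* D = 0 ∧ w ᵥ* A + h ᵥ* C ∈ dotAnnihilator V := by
  rw [mem_dotAnnihilator] at hw
  let T : (q → K) × V →ₗ[K] p → K :=
    D.mulVecLin ∘ₗ LinearMap.fst K _ _ + C.mulVecLin ∘ₗ V.subtype ∘ₗ LinearMap.snd K _ _
  let φ : Module.Dual K ((q → K) × V) := dotProductEquiv K n w ∘ₗ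
    (B.mulVecLin ∘ₗ LinearMap.fst K _ _ + A.mulVecLin ∘ₗ V.subtype ∘ₗ LinearMap.snd K _ _)
  have hφ : φ ∈ LinearMap.range T.dualMap := by
    rw [LinearMap.range_dualMap_eq_dualAnnihilator_ker, Submodule.mem_dualAnnihilator]
    rintro ⟨u, x⟩ hux
    have : C *ᵥ x + D *ᵥ u = 0 := by simpa [T, add_comm] using hux
    simpa [φ, add_comm] using hw _ (hV x x.2 u this)
  obtain ⟨ψ, hψ⟩ := hφ
  obtain ⟨g, rfl⟩ := (dotProductEquiv K p).surjective ψ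
  have hg (u : q → K) (x : V) : g ⬝ᵥ (D *ᵥ u + C *ᵥ x) = w ⬝ᵥ (B *ᵥ u + A *ᵥ x) := by
    simpa [T, φ] using LinearMap.congr_fun hψ (u, x)
  refine ⟨-g, dotProduct_eq_zero _ fun u => ?_, mem_dotAnnihilator.2 fun x hx => ?_⟩
  all_goals rw [add_dotProduct, neg_vecMul, neg_dotProduct, ← sub_eq_add_neg, sub_eq_zero,
    ← dotProduct_mulVec, ← dotProduct_mulVec]
  · simpa using (hg u 0).symm
  · simpa using (hg 0 ⟨x, hx⟩).symm

end LeftZero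

section OutputNulling

variable {n p q : ℕ} {A : Matrix (Fin n) (Fin n) ℂ} {B : Matrix (Fin n) (Fin q) ℂ}
  {C : Matrix (Fin p) (Fin n) ℂ} {D : Matrix (Fin p) (Fin q) ℂ}

theorem OutNullReach.mem_of_isInputContaining {V : Submodule ℂ (Fin n → ℂ)}
    (hV : IsInputContaining A B C D V) {x : Fin n → ℂ} (hx : OutNullReach A B C D x) : x ∈ V := by
  obtain ⟨j, ξ, u, h0, hstep, rfl⟩ := hx
  suffices ∀ i ≤ j, ξ i ∈ V from this j le_rfl
  intro i
  induction i with
  | zero => exact fun _ => h0 ▸ V.zero_mem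
  | succ i ih =>
    intro hi
    obtain ⟨hξ, hy⟩ := hstep i hi
    exact hξ ▸ hV _ (ih (Nat.le_of_succ_le hi)) _ hy

variable (A B C D) in
def outputNullingTrajectories (j : ℕ) :
    Submodule ℂ ((ℕ → Fin n → ℂ) × (ℕ → Fin q → ℂ)) where
  carrier := {z | z.1 0 = 0 ∧
    ∀ i < j, z.1 (i + 1) = A *ᵥ z.1 i + B *ᵥ z.2 i ∧ C *ᵥ z.1 i + D *ᵥ z.2 i = 0}
  zero_mem' := by simp
  add_mem' := by
    rintro ⟨ξ, u⟩ ⟨ξ', u'⟩ ⟨h0, hs⟩ ⟨h0', hs'⟩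
    dsimp only at h0 hs h0' hs'
    simp only [Prod.mk_add_mk, Set.mem_ofPred_eq]
    refine ⟨by rw [Pi.add_apply, h0, h0', add_zero], fun i hi => ?_⟩
    obtain ⟨e, o⟩ := hs i hi
    obtain ⟨e', o'⟩ := hs' i hi
    constructor
    · simp only [Pi.add_apply, mulVec_add, e, e']
      abel
    · simp only [Pi.add_apply, mulVec_add]
      rw [add_add_add_comm, o, o', add_zero]
  smul_mem' := by
    rintro c ⟨ξ, u⟩ ⟨h0, hs⟩
    dsimp only at h0 hs
    simp only [Prod.smul_mk, Set.mem_ofPred_eq]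
    refine ⟨by simp [h0], fun i hi => ?_⟩
    obtain ⟨e, o⟩ := hs i hi
    simp [mulVec_smul, e, o, ← smul_add]

variable (A B C D) in
def outNullReachIn (j : ℕ) : Submodule ℂ (Fin n → ℂ) :=
  (outputNullingTrajectories A B C D j).map (LinearMap.proj j ∘ₗ LinearMap.fst ℂ _ _)

theorem mem_outNullReachIn {j : ℕ} {x : Fin n → ℂ} :
    x ∈ outNullReachIn A B C D j ↔ ∃ (ξ : ℕ → (Fin n → ℂ)) (u : ℕ → (Fin q → ℂ)),
      ξ 0 = 0 ∧ (∀ i < j, ξ (i + 1) = A *ᵥ ξ i + B *ᵥ u i ∧ C *ᵥ ξ i + D *ᵥ u i = 0) ∧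
        ξ j = x := by
  simp [outNullReachIn, outputNullingTrajectories, and_assoc]

theorem outNullReachIn_le_succ (j : ℕ) :
    outNullReachIn A B C D j ≤ outNullReachIn A B C D (j + 1) := by
  intro x hx
  obtain ⟨ξ, u, h0, hs, rfl⟩ := mem_outNullReachIn.1 hx
  refine mem_outNullReachIn.2 ⟨fun i => ξ (i - 1), fun i => if i = 0 then 0 else u (i - 1),
    h0, ?_, rfl⟩
  rintro (_ | i) hi
  · simp [h0]
  · simpa using hs i (by omega)

theorem mulVec_add_mem_outNullReachIn_succ {j : ℕ} {x : Fin n → ℂ} {u : Fin q → ℂ}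
    (hx : x ∈ outNullReachIn A B C D j) (hu : C *ᵥ x + D *ᵥ u = 0) :
    A *ᵥ x + B *ᵥ u ∈ outNullReachIn A B C D (j + 1) := by
  obtain ⟨ξ, v, h0, hs, rfl⟩ := mem_outNullReachIn.1 hx
  refine mem_outNullReachIn.2 ⟨Function.update ξ (j + 1) (A *ᵥ ξ j + B *ᵥ u),
    Function.update v j u, by simp [h0], fun i hi => ?_, by simp⟩
  rcases Nat.lt_succ_iff_lt_or_eq.1 hi with hi | rfl
  · simpa [hi.ne, show i ≠ j + 1 by omega] using hs i hi
  · simpa using hu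

variable (A B C D) in
def outNullReachSpace : Submodule ℂ (Fin n → ℂ) :=
  ⨆ j, outNullReachIn A B C D j

theorem mem_outNullReachSpace_iff_exists {x : Fin n → ℂ} :
    x ∈ outNullReachSpace A B C D ↔ ∃ j, x ∈ outNullReachIn A B C D j :=
  Submodule.mem_iSup_of_directed _ (monotone_nat_of_le_succ outNullReachIn_le_succ).directed_le

theorem mem_outNullReachSpace {x : Fin n → ℂ} :
    x ∈ outNullReachSpace A B C D ↔ OutNullReach A B C D x := by
  simp only [mem_outNullReachSpace_iff_exists, mem_outNullReachIn, OutNullReach]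

theorem isInputContaining_outNullReachSpace :
    IsInputContaining A B C D (outNullReachSpace A B C D) := by
  intro x hx u hu
  obtain ⟨j, hj⟩ := mem_outNullReachSpace_iff_exists.1 hx
  exact mem_outNullReachSpace_iff_exists.2 ⟨j + 1, mulVec_add_mem_outNullReachIn_succ hj hu⟩

end OutputNulling

/-- for a maximal solution of the left zero equation,
`ker Π'_max` equals the output-nulling reachable set `C*(Σ)`. -/
theorem stmt14 {n p q s : ℕ}
    (A : Matrix (Fin n) (Fin n) ℂ) (B : Matrix (Fin n) (Fin q) ℂ)
    (C : Matrix (Fin p) (Fin n) ℂ) (D : Matrix (Fin p) (Fin q) ℂ)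
    (Pm' : Matrix (Fin s) (Fin n) ℂ) (Hm' : Matrix (Fin s) (Fin p) ℂ)
    (Λm' : Matrix (Fin s) (Fin s) ℂ)
    (h1 : Pm' * A + Hm' * C = Λm' * Pm') (h2 : Pm' * B + Hm' * D = 0)
    (hmax : ∀ (t : ℕ) (P' : Matrix (Fin t) (Fin n) ℂ) (H' : Matrix (Fin t) (Fin p) ℂ)
      (L' : Matrix (Fin t) (Fin t) ℂ),
      P' * A + H' * C = L' * P' → P' * B + H' * D = 0 →
      Submodule.span ℂ (Set.range fun i => P' i) ≤
        Submodule.span ℂ (Set.range fun i => Pm' i)) :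
    ∀ x : Fin n → ℂ, Pm' *ᵥ x = 0 ↔ OutNullReach A B C D x := by
  intro x
  constructor
  · intro hx
    obtain ⟨t, P', H', L', hA, hB, hspan⟩ := exists_leftZero_span_rows_eq _
      fun w hw => isInputContaining_outNullReachSpace.exists_leftZero_row hw
    refine mem_outNullReachSpace.1 (mem_of_forall_mem_dotAnnihilator fun w hw => ?_)
    exact dotProduct_eq_zero_of_mem_span_rows (hmax t P' H' L' hA hB (hspan.ge hw)) hx
  · exact fun hx => LinearMap.mem_ker.1
      (hx.mem_of_isInputContaining (isInputContaining_ker_of_leftZero h1 h2))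
end
end

section
/- Let x ∈ C*(Σ), the output-nulling reachable set of the system (A,B,C,D), and let (Π', H', Λ') be any solution of Π'A + H'C = Λ'Π', Π'B + H'D = 0. Then Π'x = 0. -/
open Matrix

noncomputable section

/-- every state in the output-nulling reachable set is annihilated by any
solution of the left zero equation. -/
theorem stmt15 {n p q s : ℕ}
    (A : Matrix (Fin n) (Fin n) ℂ) (B : Matrix (Fin n) (Fin q) ℂ)
    (C : Matrix (Fin p) (Fin n) ℂ) (D : Matrix (Fin p) (Fin q) ℂ)
    (P' : Matrix (Fin s) (Fin n) ℂ) (H' : Matrix (Fin s) (Fin p) ℂ)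
    (Λ' : Matrix (Fin s) (Fin s) ℂ)
    (h1 : P' * A + H' * C = Λ' * P') (h2 : P' * B + H' * D = 0)
    (x : Fin n → ℂ) (hx : OutNullReach A B C D x) :
    P' *ᵥ x = 0 := by
  obtain ⟨j, ξ, u, h0, hstep, hj⟩ := hx
  suffices h : ∀ i ≤ j, P' *ᵥ ξ i = 0 by
    rw [← hj]; exact h j le_rfl
  intro i hi
  induction i with
  | zero => simp [h0]
  | succ k ih =>
    have hk := hstep k (by omega)
    have ihk := ih (by omega)
    have hA : P' * A = Λ' * P' - H' * C := eq_sub_of_add_eq h1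
    have hB : P' * B = -(H' * D) := eq_neg_of_add_eq_zero_left h2
    have e1 : (Λ' * P') *ᵥ ξ k = 0 := by
      rw [← Matrix.mulVec_mulVec, ihk, Matrix.mulVec_zero]
    have e2 : (H' * C) *ᵥ ξ k + (H' * D) *ᵥ u k = 0 := by
      rw [← Matrix.mulVec_mulVec, ← Matrix.mulVec_mulVec, ← Matrix.mulVec_add, hk.2,
        Matrix.mulVec_zero]
    rw [hk.1, Matrix.mulVec_add, Matrix.mulVec_mulVec, Matrix.mulVec_mulVec, hA, hB,
        Matrix.sub_mulVec, Matrix.neg_mulVec, e1, zero_sub]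
    rw [← neg_add, e2, neg_zero]
end
end

section
/- Let (A,B,C,D) be a minimal realization of F. Suppose Π'_f Π_f is a square invertible matrix, where Π_f and Π'_f arise from maximal right and left zero solutions satisfying Π'_f Π_k = 0, Π'_k Π_f = 0, together with the block structure Λ_fzk = [[Λ_k, Λ_kf],[0, Λ_f]] and Λ'_fzk = [[Λ'_k, 0],[Λ'_kf, Λ'_f]]. If Π'_fzk Π_fzk·Λ_fzk = Λ'_fzk·Π'_fzk Π_fzk with Π'_fzk Π_k = 0 and Π'_k Π_fzk = 0, then (Π'_f Π_f)·Λ_f = Λ'_f·(Π'_f Π_f), so the right finite zero matrix Λ_f and the left finite zero matrix Λ'_f are similar. -/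
open Matrix

noncomputable section

/-! The cross conditions `Π'_f Π_k = 0` and `Π'_k Π_f = 0` make `Π'_fzk Π_fzk` block diagonal.
Multiplying a block-diagonal matrix by an arbitrary block matrix on either side, the
`(2,2)` block of the product only sees the `(2,2)` blocks, so the `(2,2)` block of the
hypothesis is `(Π'_f Π_f) Λ_f = Λ'_f (Π'_f Π_f)`. -/

namespace Matrix

variable {R l l' m m' n o p q : Type*}

theorem fromRows_mul_fromCols_of_mul_eq_zero [Semiring R] [Fintype n]
    (A₁ : Matrix m n R) (A₂ : Matrix o n R) (B₁ : Matrix n p R) (B₂ : Matrix n q R)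
    (h₁₂ : A₁ * B₂ = 0) (h₂₁ : A₂ * B₁ = 0) :
    fromRows A₁ A₂ * fromCols B₁ B₂ = fromBlocks (A₁ * B₁) 0 0 (A₂ * B₂) := by
  rw [fromRows_mul_fromCols, h₁₂, h₂₁]

theorem mul_eq_mul_of_fromBlocks_diag_mul_eq [NonUnitalNonAssocSemiring R] [Fintype l] [Fintype m]
    [Fintype l'] [Fintype m']
    {X₁₁ : Matrix l' l R} {X₂₂ : Matrix m' m R}
    {L₁₁ : Matrix l l R} {L₁₂ : Matrix l m R} {L₂₁ : Matrix m l R} {L₂₂ : Matrix m m R}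
    {L'₁₁ : Matrix l' l' R} {L'₁₂ : Matrix l' m' R} {L'₂₁ : Matrix m' l' R} {L'₂₂ : Matrix m' m' R}
    (h : fromBlocks X₁₁ 0 0 X₂₂ * fromBlocks L₁₁ L₁₂ L₂₁ L₂₂
        = fromBlocks L'₁₁ L'₁₂ L'₂₁ L'₂₂ * fromBlocks X₁₁ 0 0 X₂₂) :
    X₂₂ * L₂₂ = L'₂₂ * X₂₂ := by
  simpa only [fromBlocks_multiply, toBlocks_fromBlocks₂₂, Matrix.zero_mul, Matrix.mul_zero,
    zero_add, add_zero] using congrArg toBlocks₂₂ h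

theorem mul_mul_nonsing_inv_eq_of_mul_eq [CommRing R] [Fintype n] [DecidableEq n]
    {P L L' : Matrix n n R} (hP : IsUnit P.det) (h : P * L = L' * P) :
    P * L * P⁻¹ = L' := by
  rw [h, mul_nonsing_inv_cancel_right _ _ hP]

end Matrix

theorem stmt16_general {n a a' s : ℕ}
    (Pk : Matrix (Fin n) (Fin a) ℂ) (Pf : Matrix (Fin n) (Fin s) ℂ)
    (Pk' : Matrix (Fin a') (Fin n) ℂ) (Pf' : Matrix (Fin s) (Fin n) ℂ)
    (Λk : Matrix (Fin a) (Fin a) ℂ) (Λkf : Matrix (Fin a) (Fin s) ℂ)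
    (Λf : Matrix (Fin s) (Fin s) ℂ)
    (Λk' : Matrix (Fin a') (Fin a') ℂ) (Λkf' : Matrix (Fin s) (Fin a') ℂ)
    (Λf' : Matrix (Fin s) (Fin s) ℂ)
    (hfk : Pf' * Pk = 0) (hkf : Pk' * Pf = 0)
    (hEq : (fromRows Pk' Pf' * fromCols Pk Pf) * fromBlocks Λk Λkf 0 Λf
        = fromBlocks Λk' 0 Λkf' Λf' * (fromRows Pk' Pf' * fromCols Pk Pf))
    (hinv : IsUnit (Pf' * Pf)) :
    (Pf' * Pf) * Λf = Λf' * (Pf' * Pf) ∧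
      (Pf' * Pf) * Λf * (Pf' * Pf)⁻¹ = Λf' := by
  rw [fromRows_mul_fromCols_of_mul_eq_zero _ _ _ _ hkf hfk] at hEq
  have hf : (Pf' * Pf) * Λf = Λf' * (Pf' * Pf) := mul_eq_mul_of_fromBlocks_diag_mul_eq hEq
  exact ⟨hf, mul_mul_nonsing_inv_eq_of_mul_eq ((isUnit_iff_isUnit_det _).mp hinv) hf⟩

/-- the right and left finite zero matrices are similar,
via the invertible matrix `Π'_f Π_f`. -/
theorem stmt16 {n p q a a' s : ℕ}
    (A : Matrix (Fin n) (Fin n) ℂ) (B : Matrix (Fin n) (Fin q) ℂ)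
    (C : Matrix (Fin p) (Fin n) ℂ) (D : Matrix (Fin p) (Fin q) ℂ)
    (hobs : Observable C A) (hctrb : Controllable A B)
    (Pk : Matrix (Fin n) (Fin a) ℂ) (Pf : Matrix (Fin n) (Fin s) ℂ)
    (Pk' : Matrix (Fin a') (Fin n) ℂ) (Pf' : Matrix (Fin s) (Fin n) ℂ)
    (Λk : Matrix (Fin a) (Fin a) ℂ) (Λkf : Matrix (Fin a) (Fin s) ℂ)
    (Λf : Matrix (Fin s) (Fin s) ℂ)
    (Λk' : Matrix (Fin a') (Fin a') ℂ) (Λkf' : Matrix (Fin s) (Fin a') ℂ)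
    (Λf' : Matrix (Fin s) (Fin s) ℂ)
    (hfk : Pf' * Pk = 0) (hkf : Pk' * Pf = 0) (hkk : Pk' * Pk = 0)
    (hEq : (fromRows Pk' Pf' * fromCols Pk Pf) * fromBlocks Λk Λkf 0 Λf
        = fromBlocks Λk' 0 Λkf' Λf' * (fromRows Pk' Pf' * fromCols Pk Pf))
    (hinv : IsUnit (Pf' * Pf)) :
    (Pf' * Pf) * Λf = Λf' * (Pf' * Pf) ∧
      (Pf' * Pf) * Λf * (Pf' * Pf)⁻¹ = Λf' :=
  stmt16_general Pk Pf Pk' Pf' Λk Λkf Λf Λk' Λkf' Λf' hfk hkf hEq hinv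
end
end

section
/- Let (C,A) be observable and let (Π_max, H_max, Λ_max) be a maximal solution of AΠ + BH = ΠΛ, CΠ + DH = 0 with ker Π_max = {0}. Then the set C*(Σ) of output-nulling reachable states is contained in V*(Σ) = Im Π_max if and only if every vector of the form Bη with Dη = 0 lies in Im Π_max. -/
open Matrix

noncomputable section

/-- `C*(Σ) ⊆ Im Π_max` iff every `Bη` with `Dη = 0` lies in `Im Π_max`. -/
theorem stmt17 {n p q s : ℕ}
    (A : Matrix (Fin n) (Fin n) ℂ) (B : Matrix (Fin n) (Fin q) ℂ)
    (C : Matrix (Fin p) (Fin n) ℂ) (D : Matrix (Fin p) (Fin q) ℂ)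
    (hobs : Observable C A)
    (Pmax : Matrix (Fin n) (Fin s) ℂ) (Hmax : Matrix (Fin q) (Fin s) ℂ)
    (Λmax : Matrix (Fin s) (Fin s) ℂ)
    (h1 : A * Pmax + B * Hmax = Pmax * Λmax) (h2 : C * Pmax + D * Hmax = 0)
    (hmax : ∀ (t : ℕ) (P : Matrix (Fin n) (Fin t) ℂ) (H : Matrix (Fin q) (Fin t) ℂ)
      (L : Matrix (Fin t) (Fin t) ℂ),
      A * P + B * H = P * L → C * P + D * H = 0 → mrange P ≤ mrange Pmax)
    (hker : ∀ v : Fin s → ℂ, Pmax *ᵥ v = 0 → v = 0) :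
    (∀ x : Fin n → ℂ, OutNullReach A B C D x → ∃ ξ : Fin s → ℂ, Pmax *ᵥ ξ = x) ↔
      (∀ η : Fin q → ℂ, D *ᵥ η = 0 → ∃ ξ : Fin s → ℂ, Pmax *ᵥ ξ = B *ᵥ η) := by
  constructor
  · intro h η hη
    apply h
    refine ⟨1, fun i => if i = 0 then 0 else B *ᵥ η, fun _ => η, by simp, ?_, by simp⟩
    intro i hi
    interval_cases i
    simp [hη, Matrix.mulVec_zero]
  · intro h x hx
    obtain ⟨j, ξ, u, h0, hstep, hj⟩ := hx
    subst hj
    have key : ∀ i, i ≤ j → ∃ ζ : Fin s → ℂ, Pmax *ᵥ ζ = ξ i := by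
      intro i
      induction i with
      | zero => intro _; exact ⟨0, by simp [h0, Matrix.mulVec_zero]⟩
      | succ i ih =>
        intro hij
        obtain ⟨ζ, hζ⟩ := ih (Nat.le_of_succ_le hij)
        obtain ⟨hdyn, hout⟩ := hstep i (Nat.lt_of_succ_le hij)
        have hD : D *ᵥ (u i - Hmax *ᵥ ζ) = 0 := by
          have h2' : (C * Pmax + D * Hmax) *ᵥ ζ = 0 := by rw [h2]; simp
          have : C *ᵥ (Pmax *ᵥ ζ) + D *ᵥ (Hmax *ᵥ ζ) = 0 := by
            simpa [Matrix.add_mulVec, Matrix.mulVec_mulVec] using h2'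
          rw [hζ] at this
          rw [Matrix.mulVec_sub]
          linear_combination (norm := module) hout - this
        obtain ⟨ζ', hζ'⟩ := h _ hD
        refine ⟨Λmax *ᵥ ζ + ζ', ?_⟩
        have h1' : (A * Pmax + B * Hmax) *ᵥ ζ = (Pmax * Λmax) *ᵥ ζ := by rw [h1]
        rw [Matrix.add_mulVec] at h1'
        simp only [← Matrix.mulVec_mulVec] at h1'
        rw [hζ] at h1'
        rw [hdyn, Matrix.mulVec_add]
        rw [Matrix.mulVec_sub] at hζ'
        linear_combination (norm := module) hζ' - h1'
    exact key j le_rfl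
end
end

section
/- Suppose AΠ_k + BH_k = Π_kΛ_k, CΠ_k + DH_k = 0, BR₀ = Π_kα_k, DR₀ = 0, R₀*R₀ = I, β_k = −α_k*σ − R₀*H_k with σ solving the associated Riccati equation, and [R₀, L₀] is unitary. Then F(z)·L_β(z) = DL₀ + C(zI−A)^{-1}(B + Π_kσ^{-1}H_k*)L₀, where F(z) = D + C(zI−A)^{-1}B and L_β(z) = L₀ − (H_k+R₀β_k)(zI−(Λ_k+α_kβ_k))^{-1}σ^{-1}H_k*L₀. -/
open Matrix

noncomputable section

lemma mc_add {a b : ℕ} (M N : Matrix (Fin a) (Fin b) ℂ) : mc (M + N) = mc M + mc N :=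
  Matrix.map_add _ (map_add _) M N

lemma mc_sub {a b : ℕ} (M N : Matrix (Fin a) (Fin b) ℂ) : mc (M - N) = mc M - mc N :=
  Matrix.map_sub _ (map_sub _) M N

lemma mc_neg {a b : ℕ} (M : Matrix (Fin a) (Fin b) ℂ) : mc (-M) = -mc M :=
  Matrix.map_neg _ (map_neg _) M

/-- `zI − M`, so that `res M = (zsub M)⁻¹`. -/
def zsub {a : ℕ} (M : Matrix (Fin a) (Fin a) ℂ) : Matrix (Fin a) (Fin a) (RatFunc ℂ) :=
  Matrix.scalar (Fin a) RatFunc.X - mc M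

lemma zsub_eq_map_charmatrix {a : ℕ} (M : Matrix (Fin a) (Fin a) ℂ) :
    zsub M = (algebraMap (Polynomial ℂ) (RatFunc ℂ)).mapMatrix M.charmatrix := by
  ext i j
  by_cases h : i = j <;>
    simp [h, zsub, mc, Matrix.charmatrix, Matrix.scalar_apply, RatFunc.algebraMap_X,
      RatFunc.algebraMap_C]

lemma isUnit_det_zsub {a : ℕ} (M : Matrix (Fin a) (Fin a) ℂ) : IsUnit (zsub M).det := by
  rw [zsub_eq_map_charmatrix, ← RingHom.map_det, isUnit_iff_ne_zero, ← Matrix.charpoly,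
    map_ne_zero_iff _ (IsFractionRing.injective _ _)]
  exact M.charpoly_monic.ne_zero

lemma res_mul_zsub {a : ℕ} (M : Matrix (Fin a) (Fin a) ℂ) : res M * zsub M = 1 :=
  Matrix.nonsing_inv_mul _ (isUnit_det_zsub M)

lemma zsub_mul_res {a : ℕ} (M : Matrix (Fin a) (Fin a) ℂ) : zsub M * res M = 1 :=
  Matrix.mul_nonsing_inv _ (isUnit_det_zsub M)

lemma mc_mul_eq_zsub_mul_sub_mul_zsub {n q r : ℕ} {A : Matrix (Fin n) (Fin n) ℂ}
    {B : Matrix (Fin n) (Fin q) ℂ} {G : Matrix (Fin q) (Fin r) ℂ} {P : Matrix (Fin n) (Fin r) ℂ}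
    {M : Matrix (Fin r) (Fin r) ℂ} (h : B * G = P * M - A * P) :
    mc B * mc G = zsub A * mc P - mc P * zsub M := by
  rw [zsub, zsub, Matrix.sub_mul, Matrix.mul_sub, scalar_apply, scalar_apply,
    ← smul_eq_diagonal_mul, ← smul_eq_mul_diagonal, ← mc_mul, ← mc_mul, ← mc_mul, h, mc_sub,
    sub_sub_sub_cancel_left]

lemma mul_feedback_eq {R : Type*} [Ring R] {n q r m : Type*} [Fintype n] [Fintype q] [Fintype r]
    [Fintype m]
    {A : Matrix n n R} {B : Matrix n q R} {P : Matrix n r R} {H : Matrix q r R}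
    {Λ : Matrix r r R} {α : Matrix r m R} {R₀ : Matrix q m R} (β : Matrix m r R)
    (hP : A * P + B * H = P * Λ) (hR₀ : B * R₀ = P * α) :
    B * (H + R₀ * β) = P * (Λ + α * β) - A * P := by
  rw [Matrix.mul_add, ← Matrix.mul_assoc, hR₀, Matrix.mul_add, Matrix.mul_assoc, ← hP]
  abel

lemma mul_feedback_eq_neg {R : Type*} [Ring R] {n p q r m : Type*} [Fintype n] [Fintype q]
    [Fintype m] {C : Matrix p n R} {D : Matrix p q R} {P : Matrix n r R} {H : Matrix q r R}
    {R₀ : Matrix q m R} (β : Matrix m r R) (hP : C * P + D * H = 0) (hR₀ : D * R₀ = 0) :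
    D * (H + R₀ * β) = -(C * P) := by
  rw [Matrix.mul_add, ← Matrix.mul_assoc, hR₀, Matrix.zero_mul, add_zero,
    eq_neg_of_add_eq_zero_right hP]

lemma realization_mul_sub_eq {R : Type*} [Ring R] {n p q r s : Type*} [Fintype n] [Fintype q]
    [Fintype r] [DecidableEq n] [DecidableEq r]
    {RA ZA : Matrix n n R} {RL ZL : Matrix r r R} {B : Matrix n q R} {C : Matrix p n R}
    {D : Matrix p q R} {P : Matrix n r R} {G : Matrix q r R} (L : Matrix q s R)
    (S : Matrix r s R) (hA : RA * ZA = 1) (hL : ZL * RL = 1)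
    (hB : B * G = ZA * P - P * ZL) (hD : D * G = -(C * P)) :
    (D + C * RA * B) * (L - G * RL * S) = D * L + C * RA * (B * L + P * S) := by
  have hFG : (D + C * RA * B) * G = -(C * RA * P * ZL) := by
    rw [Matrix.add_mul, hD, Matrix.mul_assoc (C * RA), hB, Matrix.mul_sub,
      ← Matrix.mul_assoc (C * RA), Matrix.mul_assoc C RA ZA, hA, Matrix.mul_one,
      ← Matrix.mul_assoc (C * RA) P]
    abel
  have hFGRS : (D + C * RA * B) * (G * RL * S) = -(C * RA * P * S) := by
    rw [← Matrix.mul_assoc, ← Matrix.mul_assoc, hFG, Matrix.neg_mul, Matrix.neg_mul,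
      Matrix.mul_assoc _ ZL, hL, Matrix.mul_one]
  rw [Matrix.mul_sub, hFGRS, sub_neg_eq_add, Matrix.add_mul, Matrix.mul_add,
    Matrix.mul_assoc (C * RA) B, Matrix.mul_assoc (C * RA) P, add_assoc]

theorem stmt18_general {n p q rk m sL : ℕ}
    (A : Matrix (Fin n) (Fin n) ℂ) (B : Matrix (Fin n) (Fin q) ℂ)
    (C : Matrix (Fin p) (Fin n) ℂ) (D : Matrix (Fin p) (Fin q) ℂ)
    (Pk : Matrix (Fin n) (Fin rk) ℂ) (Hk : Matrix (Fin q) (Fin rk) ℂ)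
    (Λk : Matrix (Fin rk) (Fin rk) ℂ) (αk : Matrix (Fin rk) (Fin m) ℂ)
    (R₀ : Matrix (Fin q) (Fin m) ℂ) (L₀ : Matrix (Fin q) (Fin sL) ℂ)
    (σ : Matrix (Fin rk) (Fin rk) ℂ) (βk : Matrix (Fin m) (Fin rk) ℂ)
    (h1 : A * Pk + B * Hk = Pk * Λk) (h2 : C * Pk + D * Hk = 0)
    (hBR : B * R₀ = Pk * αk) (hDR : D * R₀ = 0) :
    (mc D + mc C * res A * mc B) *
        (mc L₀ - mc (Hk + R₀ * βk) * res (Λk + αk * βk) * mc (σ⁻¹ * Hkᴴ * L₀))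
      = mc (D * L₀) + mc C * res A * mc ((B + Pk * σ⁻¹ * Hkᴴ) * L₀) := by
  have hB : mc B * mc (Hk + R₀ * βk) = zsub A * mc Pk - mc Pk * zsub (Λk + αk * βk) :=
    mc_mul_eq_zsub_mul_sub_mul_zsub (mul_feedback_eq βk h1 hBR)
  have hD : mc D * mc (Hk + R₀ * βk) = -(mc C * mc Pk) := by
    rw [← mc_mul, mul_feedback_eq_neg βk h2 hDR, mc_neg, mc_mul]
  rw [realization_mul_sub_eq _ _ (res_mul_zsub A) (zsub_mul_res _) hB hD]
  simp only [mc_mul, mc_add, Matrix.add_mul, Matrix.mul_assoc]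

/-- the realization of the product `F · L_β`. -/
theorem stmt18 {n p q rk m sL : ℕ}
    (A : Matrix (Fin n) (Fin n) ℂ) (B : Matrix (Fin n) (Fin q) ℂ)
    (C : Matrix (Fin p) (Fin n) ℂ) (D : Matrix (Fin p) (Fin q) ℂ)
    (Pk : Matrix (Fin n) (Fin rk) ℂ) (Hk : Matrix (Fin q) (Fin rk) ℂ)
    (Λk : Matrix (Fin rk) (Fin rk) ℂ) (αk : Matrix (Fin rk) (Fin m) ℂ)
    (R₀ : Matrix (Fin q) (Fin m) ℂ) (L₀ : Matrix (Fin q) (Fin sL) ℂ)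
    (σ : Matrix (Fin rk) (Fin rk) ℂ) (βk : Matrix (Fin m) (Fin rk) ℂ)
    (h1 : A * Pk + B * Hk = Pk * Λk) (h2 : C * Pk + D * Hk = 0)
    (hBR : B * R₀ = Pk * αk) (hDR : D * R₀ = 0)
    (hR : R₀ᴴ * R₀ = 1)
    (hσher : σ.IsHermitian) (hσinv : IsUnit σ.det)
    (hric : σ * (Λk - αk * R₀ᴴ * Hk) + (Λk - αk * R₀ᴴ * Hk)ᴴ * σ
        - σ * αk * αkᴴ * σ + Hkᴴ * (1 - R₀ * R₀ᴴ) * Hk = 0)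
    (hβ : βk = -(αkᴴ * σ) - R₀ᴴ * Hk)
    (hU1 : (fromCols R₀ L₀)ᴴ * fromCols R₀ L₀ = 1)
    (hU2 : fromCols R₀ L₀ * (fromCols R₀ L₀)ᴴ = 1) :
    (mc D + mc C * res A * mc B) *
        (mc L₀ - mc (Hk + R₀ * βk) * res (Λk + αk * βk) * mc (σ⁻¹ * Hkᴴ * L₀))
      = mc (D * L₀) + mc C * res A * mc ((B + Pk * σ⁻¹ * Hkᴴ) * L₀) :=
  stmt18_general A B C D Pk Hk Λk αk R₀ L₀ σ βk h1 h2 hBR hDR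
end
end

section
/- Let V = [v₁,…,v_m] be a polynomial matrix whose columns form a basis (over ℂ(z)) of a subspace 𝒱 of ℂ(z)^k, and suppose: (a) V(z₀) has full column rank for every z₀ ∈ ℂ, and (b) the highest column-degree coefficient matrix V_h has full column rank. Then for every polynomial vector ξ ∈ 𝒱 ∩ ℂ[z]^k, the unique ζ ∈ ℂ(z)^m with ξ = Vζ is a polynomial vector, and deg ξ = max_l (deg ζ_l + ν_l) where ν_l = deg v_l. -/
/-!
Clearing denominators reduces polynomiality of `ζ` to: if `q ≠ 0` divides every entry of `V p`,
then `q` divides every entry of `p`. Over an algebraically closed field, induction on the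
irreducible factors of `q` reduces this to `q = X - C z₀`, where it is the injectivity of `V(z₀)`.
For the degree formula, the coefficient of `z^n`, `n = max (deg ζ_l + ν_l)`, in `V ζ` is `V_h c`,
where `c` collects the leading coefficients of the `ζ_l` attaining the maximum; `c ≠ 0`, so
`V_h c ≠ 0`.
-/

open Matrix

noncomputable section

namespace Matrix

open Polynomial Finset

section Evaluation

variable {K : Type*} [Field K] {ι κ : Type*} [Fintype κ]

theorem X_sub_C_dvd_of_dvd_mulVec (V : Matrix ι κ K[X]) {a : K}
    (hV : ∀ c : κ → K, V.map (eval a) *ᵥ c = 0 → c = 0) {p : κ → K[X]}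
    (h : ∀ i, X - C a ∣ (V *ᵥ p) i) (l : κ) : X - C a ∣ p l := by
  have hroot : V.map (eval a) *ᵥ (eval a ∘ p) = 0 := funext fun i => by
    simpa using (RingHom.map_mulVec (evalRingHom a) V p i).symm.trans (dvd_iff_isRoot.mp (h i))
  exact dvd_iff_isRoot.mpr (congrFun (hV _ hroot) l)

theorem dvd_of_dvd_mulVec [IsAlgClosed K] (V : Matrix ι κ K[X])
    (hV : ∀ (z : K) (c : κ → K), V.map (eval z) *ᵥ c = 0 → c = 0) {q : K[X]} (hq : q ≠ 0)
    {p : κ → K[X]} (h : ∀ i, q ∣ (V *ᵥ p) i) (l : κ) : q ∣ p l := by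
  induction q using WfDvdMonoid.induction_on_irreducible generalizing p with
  | zero => exact absurd rfl hq
  | unit u hu => exact hu.dvd
  | mul b d hb hd ih =>
    obtain ⟨a, ha⟩ :=
      IsAlgClosed.exists_root d (by simp [IsAlgClosed.degree_eq_one_of_irreducible K hd])
    have hassoc : Associated (X - C a) d :=
      (irreducible_X_sub_C a).associated_of_dvd hd (dvd_iff_isRoot.mpr ha)
    have hdp : ∀ l, d ∣ p l := fun l => hassoc.dvd_iff_dvd_left.mp <|
      X_sub_C_dvd_of_dvd_mulVec V (hV a)
        (fun i => hassoc.dvd_iff_dvd_left.mpr (dvd_of_mul_right_dvd (h i))) l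
    choose p' hp' using hdp
    obtain rfl : p = d • p' := funext hp'
    rw [mulVec_smul] at h
    exact mul_dvd_mul_left d <|
      ih hb (fun i => (mul_dvd_mul_iff_left hd.ne_zero).mp (h i))

theorem exists_polynomial_mulVec_eq [IsAlgClosed K] (V : Matrix ι κ K[X])
    (hV : ∀ (z : K) (c : κ → K), V.map (eval z) *ᵥ c = 0 → c = 0) {ζ : κ → RatFunc K}
    {ξ : ι → K[X]}
    (h : V.map (algebraMap K[X] (RatFunc K)) *ᵥ ζ = algebraMap K[X] (RatFunc K) ∘ ξ) :
    ∃ η : κ → K[X], algebraMap K[X] (RatFunc K) ∘ η = ζ ∧ V *ᵥ η = ξ := by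
  obtain ⟨⟨b, hb⟩, hint⟩ :=
    IsLocalization.exist_integer_multiples_of_finite (nonZeroDivisors K[X]) ζ
  choose p hp using hint
  have hb0 : b ≠ 0 := nonZeroDivisors.ne_zero hb
  have hbp : algebraMap K[X] (RatFunc K) ∘ p = b • ζ := funext hp
  have hVp : V *ᵥ p = b • ξ := funext fun i => IsFractionRing.injective K[X] (RatFunc K) <| by
    rw [RingHom.map_mulVec, hbp, mulVec_smul, h]
    simp [Algebra.smul_def]
  obtain ⟨η, rfl⟩ : ∃ η, p = b • η := by
    choose η hη using
      dvd_of_dvd_mulVec V hV hb0 fun i => by rw [hVp]; exact dvd_mul_right b (ξ i)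
    exact ⟨η, funext hη⟩
  refine ⟨η, funext fun l => ?_, ?_⟩
  · refine mul_left_cancel₀ (IsFractionRing.to_map_ne_zero_of_mem_nonZeroDivisors hb) ?_
    simpa [Algebra.smul_def] using hp l
  · rw [mulVec_smul] at hVp
    exact smul_right_injective _ hb0 hVp

end Evaluation

section ColumnDegree

variable {R : Type*} [Semiring R] {ι κ : Type*} [Fintype ι]

def colDegree (V : Matrix ι κ R[X]) (l : κ) : ℕ :=
  univ.sup fun i => (V i l).natDegree

def colLeadingCoeff (V : Matrix ι κ R[X]) : Matrix ι κ R :=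
  of fun i l => (V i l).coeff (V.colDegree l)

theorem natDegree_le_colDegree (V : Matrix ι κ R[X]) (i : ι) (l : κ) :
    (V i l).natDegree ≤ V.colDegree l :=
  le_sup (f := fun i => (V i l).natDegree) (mem_univ i)

theorem degree_mulVec_le [Fintype κ] (V : Matrix ι κ R[X]) (p : κ → R[X]) (i : ι) :
    ((V *ᵥ p) i).degree ≤ univ.sup fun l => (p l).degree + V.colDegree l := by
  refine (degree_sum_le _ _).trans (sup_mono_fun fun l _ => ?_)
  calc (V i l * p l).degree ≤ (V i l).degree + (p l).degree := degree_mul_le _ _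
    _ ≤ V.colDegree l + (p l).degree := by
        gcongr
        exact degree_le_natDegree.trans (WithBot.coe_le_coe.mpr (V.natDegree_le_colDegree i l))
    _ = (p l).degree + V.colDegree l := add_comm _ _

theorem coeff_mulVec_of_degree_le [Fintype κ] (V : Matrix ι κ R[X]) {p : κ → R[X]} {n : ℕ}
    (h : ∀ l, (p l).degree + V.colDegree l ≤ n) (i : ι) :
    ((V *ᵥ p) i).coeff n = (V.colLeadingCoeff *ᵥ fun l => (p l).coeff (n - V.colDegree l)) i := by
  simp only [mulVec, dotProduct, finsetSum_coeff]
  refine sum_congr rfl fun l _ => ?_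
  by_cases hp : p l = 0
  · simp [hp]
  have hle : (p l).natDegree + V.colDegree l ≤ n := by
    have := h l
    rw [degree_eq_natDegree hp] at this
    exact_mod_cast this
  -- `hle` makes the truncated subtraction `n - V.colDegree l` exact.
  have hn : n = V.colDegree l + (n - V.colDegree l) := by omega
  rw [hn, coeff_mul_add_eq_of_natDegree_le (V.natDegree_le_colDegree i l) (by omega),
    add_tsub_cancel_left]
  rfl

theorem sup_degree_mulVec [Fintype κ] (V : Matrix ι κ R[X])
    (hV : ∀ c : κ → R, V.colLeadingCoeff *ᵥ c = 0 → c = 0) (p : κ → R[X]) :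
    (univ.sup fun i => ((V *ᵥ p) i).degree) = univ.sup fun l => (p l).degree + V.colDegree l := by
  refine le_antisymm (Finset.sup_le fun i _ => V.degree_mulVec_le p i) ?_
  rcases isEmpty_or_nonempty κ with hκ | hκ
  · simp
  obtain ⟨l₀, -, hl₀⟩ :=
    exists_mem_eq_sup univ univ_nonempty fun l => (p l).degree + (V.colDegree l : WithBot ℕ)
  rw [hl₀]
  by_cases hp₀ : p l₀ = 0
  · simp [hp₀]
  set n := (p l₀).natDegree + V.colDegree l₀
  have hmax : ∀ l, (p l).degree + V.colDegree l ≤ n := fun l => by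
    have := le_sup (f := fun l => (p l).degree + (V.colDegree l : WithBot ℕ)) (mem_univ l)
    rwa [hl₀, degree_eq_natDegree hp₀] at this
  set c : κ → R := fun l => (p l).coeff (n - V.colDegree l)
  have hc : c l₀ ≠ 0 := by simpa [c, n] using leadingCoeff_ne_zero.mpr hp₀
  obtain ⟨i, hi⟩ := Function.ne_iff.mp (mt (hV c) fun h0 => hc (congrFun h0 l₀))
  calc (p l₀).degree + V.colDegree l₀ = n := by rw [degree_eq_natDegree hp₀]; norm_cast
    _ ≤ ((V *ᵥ p) i).degree := le_degree_of_ne_zero (V.coeff_mulVec_of_degree_le hmax i ▸ hi)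
    _ ≤ _ := le_sup (f := fun i => ((V *ᵥ p) i).degree) (mem_univ i)

end ColumnDegree

end Matrix

theorem stmt19_general {k m : ℕ}
    (V : Matrix (Fin k) (Fin m) (Polynomial ℂ))
    (hpoint : ∀ (z₀ : ℂ) (c : Fin m → ℂ),
      (Matrix.of fun i l => (V i l).eval z₀) *ᵥ c = 0 → c = 0)
    (hhigh : ∀ c : Fin m → ℂ,
      (Matrix.of fun i l =>
        (V i l).coeff (Finset.univ.sup fun i' => (V i' l).natDegree)) *ᵥ c = 0 → c = 0) :
    ∀ (ξ : Fin k → Polynomial ℂ) (ζ : Fin m → RatFunc ℂ),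
      (V.map (algebraMap (Polynomial ℂ) (RatFunc ℂ))) *ᵥ ζ
          = (fun i => algebraMap (Polynomial ℂ) (RatFunc ℂ) (ξ i)) →
      ∃ ζp : Fin m → Polynomial ℂ,
        (∀ l, algebraMap (Polynomial ℂ) (RatFunc ℂ) (ζp l) = ζ l) ∧
        (Finset.univ.sup fun i => (ξ i).degree)
          = Finset.univ.sup fun l =>
              (ζp l).degree + ((Finset.univ.sup fun i' => (V i' l).natDegree : ℕ) : WithBot ℕ) := by
  intro ξ ζ hVζ
  obtain ⟨η, hη, rfl⟩ := V.exists_polynomial_mulVec_eq hpoint hVζ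
  exact ⟨η, congrFun hη, V.sup_degree_mulVec hhigh η⟩

/-- Forney's criterion (iv) ⇒ (ii): if a polynomial basis matrix `V` has
full column rank at every point of `ℂ` and its highest column-degree coefficient matrix
has full column rank, then every polynomial vector in the span has polynomial coordinates,
with the expected degree formula. -/
theorem stmt19 {k m : ℕ}
    (V : Matrix (Fin k) (Fin m) (Polynomial ℂ))
    (hindep : ∀ ζ : Fin m → RatFunc ℂ,
      (V.map (algebraMap (Polynomial ℂ) (RatFunc ℂ))) *ᵥ ζ = 0 → ζ = 0)
    (hpoint : ∀ (z₀ : ℂ) (c : Fin m → ℂ),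
      (Matrix.of fun i l => (V i l).eval z₀) *ᵥ c = 0 → c = 0)
    (hhigh : ∀ c : Fin m → ℂ,
      (Matrix.of fun i l =>
        (V i l).coeff (Finset.univ.sup fun i' => (V i' l).natDegree)) *ᵥ c = 0 → c = 0) :
    ∀ (ξ : Fin k → Polynomial ℂ) (ζ : Fin m → RatFunc ℂ),
      (V.map (algebraMap (Polynomial ℂ) (RatFunc ℂ))) *ᵥ ζ
          = (fun i => algebraMap (Polynomial ℂ) (RatFunc ℂ) (ξ i)) →
      ∃ ζp : Fin m → Polynomial ℂ,
        (∀ l, algebraMap (Polynomial ℂ) (RatFunc ℂ) (ζp l) = ζ l) ∧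
        (Finset.univ.sup fun i => (ξ i).degree)
          = Finset.univ.sup fun l =>
              (ζp l).degree + ((Finset.univ.sup fun i' => (V i' l).natDegree : ℕ) : WithBot ℕ) :=
  stmt19_general V hpoint hhigh
end
end
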